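/- arXiv:dg-ga/9512010 — 6 statements merged into one kernel-verified Lean document; each statement's English description precedes it below -/
import Mathlib

section
/- Fix q₀ ∈ U such that K(q₀) is invertible, and let α ∈ ℂ^m (regarded also as a real tangent vector to ℝ^{2m} ≅ ℂ^m). Then the real directional derivative of the first component z¹ of z at q₀ along α vanishes, i.e. (fderiv ℝ z¹ q₀)(α) = 0, if and only if the determinant of the m×m matrix obtained from K(q₀) by replacing its first column with the vector w(α, z(q₀)) = α − M(z(q₀))·ᾱ is zero. -/
/-!
Differentiating `F(q, z(q)) = 0` at `q₀` along `α` by the chain rule: `F` depends on `q` through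
`q ↦ q - M ζ q̄`, whose real derivative along `α` is `w(α, ζ)`, and holomorphically on `ζ`, with
complex derivative given by the matrix `K`. Hence `w(α, z(q₀)) + K(q₀) (Dz(q₀) α) = 0`, i.e.
`K(q₀) (-Dz(q₀) α) = w(α, z(q₀))`, and by Cramer's rule the determinant of `K(q₀)` with first column
replaced by `w` equals `-det K(q₀) · (Dz¹(q₀) α)`, which vanishes iff `Dz¹(q₀) α` does.
-/

open Matrix

namespace Matrix

variable {n R : Type*} [Fintype n] [DecidableEq n] [CommRing R]

theorem det_updateCol_mulVec_eq_zero_iff {K : Matrix n n R} (hK : IsUnit K.det) (x : n → R)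
    (i : n) : (K.updateCol i (K *ᵥ x)).det = 0 ↔ x i = 0 := by
  rw [← cramer_apply, cramer_eq_adjugate_mulVec, mulVec_mulVec, adjugate_mul, smul_mulVec,
    one_mulVec, Pi.smul_apply, smul_eq_mul, hK.mul_right_eq_zero]

end Matrix

theorem LinearMap.sum_apply_single_mul {ι R : Type*} [Fintype ι] [DecidableEq ι]
    [CommSemiring R] (T : (ι → R) →ₗ[R] R) (v : ι → R) :
    ∑ j, T (Pi.single j 1) * v j = T v := by
  conv_rhs => rw [← Finset.univ_sum_single v, map_sum]
  refine Finset.sum_congr rfl fun j _ => ?_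
  rw [mul_comm, ← smul_eq_mul, ← map_smul, ← Pi.single_smul', smul_eq_mul, mul_one]

section

variable {ι : Type*} [Fintype ι] {M : (ι → ℂ) → Matrix ι ι ℂ} {h : (ι → ℂ) → ι → ℂ} (i : ι)

theorem hasFDerivAt_sub_sum_mul_conj_sub {ζ₀ : ι → ℂ}
    (hM : ∀ j, DifferentiableAt ℂ (fun ζ => M ζ i j) ζ₀)
    (hh : DifferentiableAt ℂ (fun ζ => h ζ i) ζ₀) (q : ι → ℂ) :
    HasFDerivAt (fun ζ => q i - ∑ j, M ζ i j * (starRingEnd ℂ) (q j) - h ζ i)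
      (-∑ j, (starRingEnd ℂ) (q j) • fderiv ℂ (fun ζ => M ζ i j) ζ₀
        - fderiv ℂ (fun ζ => h ζ i) ζ₀) ζ₀ := by
  simpa using ((hasFDerivAt_const (q i) ζ₀).fun_sub
    (HasFDerivAt.fun_sum fun j _ => (hM j).hasFDerivAt.mul_const _)).fun_sub hh.hasFDerivAt

theorem fderiv_sub_sum_mul_conj_sub_comp_apply {z : (ι → ℂ) → ι → ℂ} {q₀ : ι → ℂ}
    (hz : DifferentiableAt ℝ z q₀)
    (hM : ∀ j, DifferentiableAt ℂ (fun ζ => M ζ i j) (z q₀))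
    (hh : DifferentiableAt ℂ (fun ζ => h ζ i) (z q₀)) (α : ι → ℂ) :
    fderiv ℝ (fun q => q i - ∑ j, M (z q) i j * (starRingEnd ℂ) (q j) - h (z q) i) q₀ α =
      (α i - ∑ j, M (z q₀) i j * (starRingEnd ℂ) (α j)) +
        fderiv ℂ (fun ζ => q₀ i - ∑ j, M ζ i j * (starRingEnd ℂ) (q₀ j) - h ζ i) (z q₀)
          (fderiv ℝ z q₀ α) := by
  have hconj : ∀ j, HasFDerivAt (fun q : ι → ℂ => (starRingEnd ℂ) (q j))
      (Complex.conjCLE.toContinuousLinearMap.comp (ContinuousLinearMap.proj j)) q₀ :=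
    fun j => (Complex.conjCLE.toContinuousLinearMap.comp
      (ContinuousLinearMap.proj j) : (ι → ℂ) →L[ℝ] ℂ).hasFDerivAt
  have hMz : ∀ j, HasFDerivAt (fun q => M (z q) i j) _ q₀ := fun j =>
    ((hM j).hasFDerivAt.restrictScalars ℝ).comp q₀ hz.hasFDerivAt
  have hhz : HasFDerivAt (fun q => h (z q) i) _ q₀ :=
    (hh.hasFDerivAt.restrictScalars ℝ).comp q₀ hz.hasFDerivAt
  have hG := ((hasFDerivAt_apply (𝕜 := ℝ) i q₀).fun_sub
    (HasFDerivAt.fun_sum (u := Finset.univ) fun j _ => (hMz j).fun_mul (hconj j))).fun_sub hhz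
  rw [hG.fderiv, (hasFDerivAt_sub_sum_mul_conj_sub i hM hh q₀).fderiv]
  simp only [Finset.sum_add_distrib, _root_.sub_apply, ContinuousLinearMap.proj_apply,
    _root_.add_apply, _root_.sum_apply, _root_.smul_apply, ContinuousLinearMap.comp_apply,
    ContinuousLinearEquiv.coe_coe, ContinuousAlgEquiv.coeCLE_apply, Complex.conjCAE_apply,
    smul_eq_mul, ContinuousLinearMap.coe_restrictScalars', _root_.neg_apply]
  ring

end

/-- Invariance of the first holomorphic coordinate `z¹` under a
constant vector field `α`, characterized by the vanishing of the determinant of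
`K(q₀)` with its first column replaced by `w(α, z(q₀)) = α − M(z(q₀))·ᾱ`
(Proposition 2.1 of Baird–Wood, specialized to a constant direction). -/
theorem invariance_iff_det_vanishes
    (m : ℕ) (hm : 2 ≤ m)
    (V : Set (Fin m → ℂ)) (hV : IsOpen V)
    (M : (Fin m → ℂ) → Matrix (Fin m) (Fin m) ℂ)
    (hM : ∀ i j, DifferentiableOn ℂ (fun ζ => M ζ i j) V)
    (h : (Fin m → ℂ) → (Fin m → ℂ))
    (hh : ∀ i, DifferentiableOn ℂ (fun ζ => h ζ i) V)
    (F : (Fin m → ℂ) → (Fin m → ℂ) → (Fin m → ℂ))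
    (hF : ∀ q ζ, F q ζ =
      fun i => q i - (∑ j, M ζ i j * (starRingEnd ℂ) (q j)) - h ζ i)
    (U : Set (Fin m → ℂ)) (hU : IsOpen U)
    (z : (Fin m → ℂ) → (Fin m → ℂ))
    (hzV : ∀ q ∈ U, z q ∈ V)
    (hzF : ∀ q ∈ U, F q (z q) = 0)
    (hzdiff : DifferentiableOn ℝ z U)
    (K : (Fin m → ℂ) → Matrix (Fin m) (Fin m) ℂ)
    (hK : ∀ q ∈ U, ∀ i j, K q i j =
      fderiv ℂ (fun ζ => F q ζ i) (z q) (Pi.single j 1))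
    (q₀ : Fin m → ℂ) (hq₀ : q₀ ∈ U)
    (hKinv : IsUnit (K q₀).det)
    (α : Fin m → ℂ) :
    fderiv ℝ (fun q => z q (⟨0, by omega⟩ : Fin m)) q₀ α = 0 ↔
      (Matrix.updateCol (K q₀) (⟨0, by omega⟩ : Fin m)
        (fun i => α i - ∑ j, M (z q₀) i j * (starRingEnd ℂ) (α j))).det = 0 := by
  simp only [hF] at hzF hK
  have hz : DifferentiableAt ℝ z q₀ := hzdiff.differentiableAt (hU.mem_nhds hq₀)
  have hV₀ : V ∈ nhds (z q₀) := hV.mem_nhds (hzV q₀ hq₀)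
  have hK_mulVec : K q₀ *ᵥ (-fderiv ℝ z q₀ α) =
      fun i => α i - ∑ j, M (z q₀) i j * (starRingEnd ℂ) (α j) := by
    funext i
    have hFz : fderiv ℝ (fun q => q i - ∑ j, M (z q) i j * (starRingEnd ℂ) (q j) - h (z q) i) q₀
        = 0 := by
      rw [← fderiv_const_apply (0 : ℂ)]
      refine Filter.EventuallyEq.fderiv_eq ?_
      filter_upwards [hU.mem_nhds hq₀] with q hq using congrFun (hzF q hq) i
    have hchain := fderiv_sub_sum_mul_conj_sub_comp_apply i hz
      (fun j => (hM i j).differentiableAt hV₀) ((hh i).differentiableAt hV₀) α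
    rw [hFz, _root_.zero_apply] at hchain
    rw [mulVec_neg, Pi.neg_apply, mulVec, dotProduct]
    simp only [hK q₀ hq₀, ← ContinuousLinearMap.coe_coe, LinearMap.sum_apply_single_mul]
    linear_combination hchain
  rw [fderiv_apply hz, ← hK_mulVec, Matrix.det_updateCol_mulVec_eq_zero_iff hKinv]
  simp
end

section
/- Let U ⊆ ℂ^m ≅ ℝ^{2m} be open and let z : U → ℂ be a C² function such that for every q ∈ U, Ψ̃(q, z(q)) = 0 and the complex derivative ∂Ψ̃/∂ζ at (q, z(q)) is nonzero. Then z is a harmonic morphism on U: Σ_{j=1}^{2m} (∂z/∂x^j)² = 0 and Σ_{j=1}^{2m} ∂²z/(∂x^j)² = 0 at every point of U. -/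
set_option maxHeartbeats 1600000


open Matrix

private lemma wz_sum_antisym {m : ℕ} (g : Fin m → Fin m → ℂ)
    (h : ∀ i j, g i j = -(g j i)) : ∑ i, ∑ j, g i j = 0 := by
  have h1 : ∑ i, ∑ j, g i j = -∑ i, ∑ j, g i j := by
    nth_rewrite 2 [Finset.sum_comm]
    rw [← Finset.sum_neg_distrib]
    exact Finset.sum_congr rfl fun i _ => by
      rw [← Finset.sum_neg_distrib]
      exact Finset.sum_congr rfl fun j _ => h i j
  linear_combination h1 / 2

private lemma wz_single_eq_smul {m : ℕ} (j : Fin m) (c : ℂ) :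
    (Pi.single j c : Fin m → ℂ) = c • (Pi.single j 1 : Fin m → ℂ) := by
  ext i; by_cases h : i = j <;> simp [Pi.single_apply, h]

private lemma wz_star_single {m : ℕ} (j : Fin m) (x : ℂ) :
    star (Pi.single j x : Fin m → ℂ) = Pi.single j (star x) := by
  ext i; by_cases h : i = j <;> simp [Pi.single_apply, h]

private lemma wz_pair_expand {m : ℕ} (A : ((Fin m → ℂ) × ℂ) →L[ℂ] ℂ) (x : Fin m → ℂ) :
    A (x, 0) = ∑ i, x i * A (Pi.single i 1, 0) := by
  have hx : ((x, (0:ℂ)) : (Fin m → ℂ) × ℂ)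
      = ∑ i, (x i) • (((Pi.single i 1 : Fin m → ℂ), (0:ℂ)) : (Fin m → ℂ) × ℂ) := by
    apply Prod.ext
    · rw [Prod.fst_sum]
      simp only [Prod.smul_mk, Prod.fst]
      rw [show ∑ i, x i • (Pi.single i 1 : Fin m → ℂ) = ∑ i, Pi.single i (x i) from
        Finset.sum_congr rfl fun i _ => (wz_single_eq_smul i (x i)).symm]
      exact (Finset.univ_sum_single x).symm
    · rw [Prod.snd_sum]
      simp
  rw [hx, map_sum]
  exact Finset.sum_congr rfl fun i _ => by rw [_root_.map_smul, smul_eq_mul]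

/-- The Weierstrass representation on `ℝ^{2m} ≅ ℂ^m`: any C²
local solution `z = z(q)` of `Ψ(q − M(z)·q̄, z) = 0` (with `M` holomorphic and
antisymmetric, `Ψ` holomorphic, and the `ζ`-derivative nonvanishing) is a
harmonic morphism: the sum of the squares of its `2m` coordinate partial
derivatives vanishes and its Laplacian vanishes. -/
theorem weierstrass_even_gives_harmonic_morphism
    (m : ℕ) (hm : 2 ≤ m)
    (M : ℂ → Matrix (Fin m) (Fin m) ℂ)
    (hM : ∀ i j, Differentiable ℂ (fun ζ => M ζ i j))
    (hManti : ∀ ζ, (M ζ)ᵀ = -(M ζ))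
    (Ψ : ((Fin m → ℂ) × ℂ) → ℂ) (hΨ : Differentiable ℂ Ψ)
    (U : Set (Fin m → ℂ)) (hU : IsOpen U)
    (z : (Fin m → ℂ) → ℂ) (hz : ContDiffOn ℝ 2 z U)
    (hsol : ∀ q ∈ U, Ψ (q - (M (z q)).mulVec (star q), z q) = 0)
    (hreg : ∀ q ∈ U,
      deriv (fun ζ => Ψ (q - (M ζ).mulVec (star q), ζ)) (z q) ≠ 0) :
    ∀ q ∈ U,
      (∑ j, ((fderiv ℝ z q (Pi.single j 1)) ^ 2
            + (fderiv ℝ z q (Pi.single j Complex.I)) ^ 2) = 0) ∧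
      (∑ j, (fderiv ℝ (fun p => fderiv ℝ z p (Pi.single j 1)) q (Pi.single j 1)
            + fderiv ℝ (fun p => fderiv ℝ z p (Pi.single j Complex.I)) q
                (Pi.single j Complex.I)) = 0) := by
  intro q₀ hq₀
  -- basic differentiability of z on U
  have hz' : ∀ q ∈ U, HasFDerivAt z (fderiv ℝ z q) q := fun q hq =>
    ((hz.contDiffAt (hU.mem_nhds hq)).differentiableAt (by norm_num)).hasFDerivAt
  -- derivatives of the entries of M
  have hMd : ∀ (i j : Fin m) (ζ : ℂ),
      HasDerivAt (fun t => M t i j) (deriv (fun t => M t i j) ζ) ζ :=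
    fun i j ζ => ((hM i j) ζ).hasDerivAt
  have hMdanti : ∀ (ζ : ℂ) (i j : Fin m),
      deriv (fun t => M t j i) ζ = -deriv (fun t => M t i j) ζ := by
    intro ζ i j
    have hfe : (fun t => M t j i) = fun t => -(M t i j) := by
      funext t
      have := congrFun (congrFun (hManti t) i) j
      simpa using this
    rw [hfe, deriv.fun_neg]
  have hManti' : ∀ (ζ : ℂ) (i j : Fin m), M ζ j i = -(M ζ i j) := by
    intro ζ i j
    have := congrFun (congrFun (hManti ζ) i) j
    simpa using this
  -- derivative of star ∘ proj
  have hstarD : ∀ (j : Fin m) (q : Fin m → ℂ),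
      HasFDerivAt (fun q' : Fin m → ℂ => star (q' j))
        ((Complex.conjCLE.toContinuousLinearMap).comp
          (ContinuousLinearMap.proj (R := ℝ) (φ := fun _ : Fin m => ℂ) j)) q := by
    intro j q
    have := Complex.conjCLE.hasFDerivAt.comp q
      (ContinuousLinearMap.proj (R := ℝ) (φ := fun _ : Fin m => ℂ) j).hasFDerivAt
    exact this
  -- derivative of the composed matrix entries
  have hMzD : ∀ (i j : Fin m) (q : Fin m → ℂ), q ∈ U →
      HasFDerivAt (fun q' => M (z q') i j)
        ((((1 : ℂ →L[ℂ] ℂ).smulRight (deriv (fun t => M t i j) (z q))).restrictScalars ℝ).comp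
          (fderiv ℝ z q)) q := by
    intro i j q hq
    have := (hasDerivAt_iff_hasFDerivAt.mp (hMd i j (z q)) |>.restrictScalars ℝ).comp q
      (hz' q hq)
    exact this
  ----------------------------------------------------------------
  -- MASTER equation (first-order implicit differentiation)
  ----------------------------------------------------------------
  have master : ∀ q ∈ U, ∀ v : Fin m → ℂ,
      deriv (fun ζ => Ψ (q - (M ζ).mulVec (star q), ζ)) (z q) * fderiv ℝ z q v
        = fderiv ℂ Ψ (q - (M (z q)).mulVec (star q), z q) ((M (z q)).mulVec (star v), 0)
          - fderiv ℂ Ψ (q - (M (z q)).mulVec (star q), z q) (v, 0) := by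
    intro q hq v
    have hzq := hz' q hq
    set Dz := fderiv ℝ z q with hDz
    set ζ := z q with hζ
    set pt : (Fin m → ℂ) × ℂ := (q - (M ζ).mulVec (star q), ζ) with hpt
    set sv : Fin m → ℂ := fun i => ∑ j, deriv (fun t => M t i j) ζ * star (q j) with hsv
    -- derivative of q' ↦ (M (z q')).mulVec (star q')
    set K : Fin m → (Fin m → ℂ) →L[ℝ] ℂ := fun j =>
      (Complex.conjCLE.toContinuousLinearMap).comp
        (ContinuousLinearMap.proj (R := ℝ) (φ := fun _ : Fin m => ℂ) j) with hK
    set C : Fin m → Fin m → (Fin m → ℂ) →L[ℝ] ℂ := fun i j =>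
      (((1 : ℂ →L[ℂ] ℂ).smulRight (deriv (fun t => M t i j) ζ)).restrictScalars ℝ).comp Dz
      with hC
    set Dmv : (Fin m → ℂ) →L[ℝ] (Fin m → ℂ) :=
      ContinuousLinearMap.pi (fun i => ∑ j, (M ζ i j • K j + star (q j) • C i j)) with hDmv
    have hmvD : HasFDerivAt (fun q' (i : Fin m) => ∑ j, M (z q') i j * star (q' j)) Dmv q := by
      rw [hDmv]
      apply hasFDerivAt_pi.2
      intro i
      exact HasFDerivAt.fun_sum (fun j _ => (hMzD i j q hq).mul (hstarD j q))
    have hmveq : ∀ q' : Fin m → ℂ,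
        (M (z q')).mulVec (star q') = fun i => ∑ j, M (z q') i j * star (q' j) := by
      intro q'; funext i; simp [Matrix.mulVec, dotProduct]
    have hφD : HasFDerivAt (fun q' => (q' - (M (z q')).mulVec (star q'), z q'))
        (((ContinuousLinearMap.id ℝ (Fin m → ℂ)) - Dmv).prod Dz) q := by
      have h1 : HasFDerivAt (fun q' => q' - fun i => ∑ j, M (z q') i j * star (q' j))
          ((ContinuousLinearMap.id ℝ (Fin m → ℂ)) - Dmv) q := (hasFDerivAt_id q).sub hmvD
      have h2 := h1.prodMk hzq
      have h3 : (fun q' => ((q' - fun i => ∑ j, M (z q') i j * star (q' j)), z q'))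
          = fun q' => (q' - (M (z q')).mulVec (star q'), z q') := by
        funext q'; rw [hmveq q']
      rwa [h3] at h2
    have hΨD : HasFDerivAt Ψ ((fderiv ℂ Ψ pt).restrictScalars ℝ) pt :=
      ((hΨ pt).hasFDerivAt).restrictScalars ℝ
    have hGD : HasFDerivAt (fun q' => Ψ (q' - (M (z q')).mulVec (star q'), z q'))
        (((fderiv ℂ Ψ pt).restrictScalars ℝ).comp
          (((ContinuousLinearMap.id ℝ (Fin m → ℂ)) - Dmv).prod Dz)) q := hΨD.comp q hφD
    have hEv : (fun q' => Ψ (q' - (M (z q')).mulVec (star q'), z q'))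
        =ᶠ[nhds q] (fun _ => (0:ℂ)) :=
      Filter.eventuallyEq_of_mem (hU.mem_nhds hq) (fun x hx => hsol x hx)
    have hG0 : HasFDerivAt (fun q' => Ψ (q' - (M (z q')).mulVec (star q'), z q'))
        (0 : (Fin m → ℂ) →L[ℝ] ℂ) q :=
      (hasFDerivAt_const (0:ℂ) q).congr_of_eventuallyEq hEv
    have huniq := hGD.unique hG0
    have happ : fderiv ℂ Ψ pt (v - Dmv v, Dz v) = 0 := by
      have := ContinuousLinearMap.ext_iff.mp huniq v
      simpa using this
    -- identify the ζ-derivative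
    have hγ : HasDerivAt (fun t : ℂ => (q - (M t).mulVec (star q), t)) ((-sv, 1)) ζ := by
      refine HasDerivAt.prodMk ?_ (hasDerivAt_id ζ)
      have h1 : HasDerivAt (fun t : ℂ => fun i => q i - ∑ j, M t i j * star (q j)) (-sv) ζ := by
        apply hasDerivAt_pi.2
        intro i
        have h2 : HasDerivAt (fun t : ℂ => q i - ∑ j, M t i j * star (q j))
            (0 - ∑ j, deriv (fun t => M t i j) ζ * star (q j)) ζ :=
          (hasDerivAt_const ζ (q i)).sub
            (HasDerivAt.fun_sum fun j _ => (hMd i j ζ).mul_const (star (q j)))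
        simpa [hsv] using h2
      have heq : (fun t : ℂ => q - (M t).mulVec (star q))
          = fun t => fun i => q i - ∑ j, M t i j * star (q j) := by
        funext t i
        simp [Matrix.mulVec, dotProduct, Finset.sum_apply]
      rw [heq]; exact h1
    have hDΨ : HasDerivAt (fun t => Ψ (q - (M t).mulVec (star q), t))
        (fderiv ℂ Ψ pt ((-sv, 1))) ζ := by
      have := ((hΨ pt).hasFDerivAt).comp_hasDerivAt (f := fun t : ℂ => (q - (M t).mulVec (star q), t)) ζ hγ
      exact this
    have hderiv_eq : deriv (fun t => Ψ (q - (M t).mulVec (star q), t)) ζ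
        = fderiv ℂ Ψ pt ((-sv, 1)) := hDΨ.deriv
    -- pair splitting
    have hpair : ((v - Dmv v : Fin m → ℂ), Dz v)
        = (((v, (0:ℂ)) : (Fin m → ℂ) × ℂ) - ((M ζ).mulVec (star v), 0))
          + (Dz v) • ((-sv, 1) : (Fin m → ℂ) × ℂ) := by
      apply Prod.ext
      · funext i
        simp only [hDmv, hK, hC, ContinuousLinearMap.pi_apply, ContinuousLinearMap.sum_apply,
          ContinuousLinearMap.add_apply, ContinuousLinearMap.smul_apply,
          ContinuousLinearMap.coe_comp', Function.comp_apply,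
          ContinuousLinearMap.proj_apply, ContinuousLinearMap.coe_restrictScalars',
          ContinuousLinearMap.smulRight_apply, ContinuousLinearMap.one_apply,
          ContinuousLinearEquiv.coe_coe, Complex.conjCLE_apply, starRingEnd_apply,
          smul_eq_mul, Prod.fst_add, Prod.fst_sub, Prod.smul_mk,
          Pi.add_apply, Pi.sub_apply, Pi.smul_apply, Pi.neg_apply,
          Matrix.mulVec, dotProduct, Pi.star_apply, hsv]
        rw [Finset.sum_add_distrib]
        have hS : ∑ x : Fin m, star (q x) * (Dz v * deriv (fun t => M t i x) ζ)
            = Dz v * ∑ x : Fin m, deriv (fun t => M t i x) ζ * star (q x) := by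
          rw [Finset.mul_sum]
          exact Finset.sum_congr rfl fun x _ => by ring
        rw [hS]
        ring
      · simp
    rw [hpair] at happ
    rw [map_add, map_sub, _root_.map_smul, smul_eq_mul] at happ
    rw [hderiv_eq]
    linear_combination happ
  ----------------------------------------------------------------
  -- KEY first-order identity (Weierstrass system)
  ----------------------------------------------------------------
  have key : ∀ q ∈ U, ∀ j : Fin m,
      fderiv ℝ z q (Pi.single j 1) + Complex.I * fderiv ℝ z q (Pi.single j Complex.I)
        + ∑ i, M (z q) i j * (fderiv ℝ z q (Pi.single i 1)
            - Complex.I * fderiv ℝ z q (Pi.single i Complex.I)) = 0 := by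
    intro q hq j
    have hcne : deriv (fun ζ => Ψ (q - (M ζ).mulVec (star q), ζ)) (z q) ≠ 0 := hreg q hq
    have hI : Complex.I * Complex.I = -1 := Complex.I_mul_I
    have hformula : ∀ r : Fin m, fderiv ℝ z q (Pi.single r 1)
        = (deriv (fun ζ => Ψ (q - (M ζ).mulVec (star q), ζ)) (z q))⁻¹
          * ((∑ i, M (z q) i r
                * fderiv ℂ Ψ (q - (M (z q)).mulVec (star q), z q) ((Pi.single i 1 : Fin m → ℂ), 0))
            - fderiv ℂ Ψ (q - (M (z q)).mulVec (star q), z q) ((Pi.single r 1 : Fin m → ℂ), 0)) := by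
      intro r
      have h1 := master q hq (Pi.single r 1)
      rw [wz_star_single, star_one, (show ∀ (A : Matrix (Fin m) (Fin m) ℂ) (r : Fin m) (x : ℂ), A.mulVec (Pi.single r x) = fun i => A i r * x from fun A r x => funext fun i => dotProduct_single _ _ _)] at h1
      rw [wz_pair_expand (fderiv ℂ Ψ (q - (M (z q)).mulVec (star q), z q))
        (fun i => M (z q) i r * 1)] at h1
      rw [show ∑ i, (M (z q) i r * 1)
            * fderiv ℂ Ψ (q - (M (z q)).mulVec (star q), z q) ((Pi.single i 1 : Fin m → ℂ), 0)
          = ∑ i, M (z q) i r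
            * fderiv ℂ Ψ (q - (M (z q)).mulVec (star q), z q) ((Pi.single i 1 : Fin m → ℂ), 0)
        from Finset.sum_congr rfl fun i _ => by ring] at h1
      field_simp at h1 ⊢
      linear_combination h1
    have hformulaI : ∀ r : Fin m, fderiv ℝ z q (Pi.single r Complex.I)
        = (deriv (fun ζ => Ψ (q - (M ζ).mulVec (star q), ζ)) (z q))⁻¹
          * (-Complex.I * (∑ i, M (z q) i r
                * fderiv ℂ Ψ (q - (M (z q)).mulVec (star q), z q) ((Pi.single i 1 : Fin m → ℂ), 0))
            - Complex.I
              * fderiv ℂ Ψ (q - (M (z q)).mulVec (star q), z q) ((Pi.single r 1 : Fin m → ℂ), 0)) := by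
      intro r
      have h1 := master q hq (Pi.single r Complex.I)
      rw [wz_star_single] at h1
      rw [show star Complex.I = -Complex.I from by simp] at h1
      rw [(show ∀ (A : Matrix (Fin m) (Fin m) ℂ) (r : Fin m) (x : ℂ), A.mulVec (Pi.single r x) = fun i => A i r * x from fun A r x => funext fun i => dotProduct_single _ _ _)] at h1
      rw [wz_pair_expand (fderiv ℂ Ψ (q - (M (z q)).mulVec (star q), z q))
        (fun i => M (z q) i r * -Complex.I)] at h1
      rw [show ∑ i, (M (z q) i r * -Complex.I)
            * fderiv ℂ Ψ (q - (M (z q)).mulVec (star q), z q) ((Pi.single i 1 : Fin m → ℂ), 0)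
          = -Complex.I * ∑ i, M (z q) i r
            * fderiv ℂ Ψ (q - (M (z q)).mulVec (star q), z q) ((Pi.single i 1 : Fin m → ℂ), 0)
        from by rw [Finset.mul_sum]; exact Finset.sum_congr rfl fun i _ => by ring] at h1
      rw [show (Pi.single r Complex.I : Fin m → ℂ) = Complex.I • (Pi.single r 1 : Fin m → ℂ) from
        wz_single_eq_smul r Complex.I] at h1
      rw [show ((Complex.I • (Pi.single r 1 : Fin m → ℂ) : Fin m → ℂ), (0:ℂ))
          = Complex.I • (((Pi.single r 1 : Fin m → ℂ), (0:ℂ)) : (Fin m → ℂ) × ℂ) from by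
        simp [Prod.smul_mk]] at h1
      rw [ContinuousLinearMap.map_smul, smul_eq_mul] at h1
      rw [show (Pi.single r Complex.I : Fin m → ℂ) = Complex.I • (Pi.single r 1 : Fin m → ℂ) from
        wz_single_eq_smul r Complex.I]
      field_simp at h1 ⊢
      linear_combination h1
    simp only [hformula, hformulaI]
    rw [Finset.sum_congr rfl fun i _ => show
        M (z q) i j * ((deriv (fun ζ => Ψ (q - (M ζ).mulVec (star q), ζ)) (z q))⁻¹
          * ((∑ k, M (z q) k i
                * fderiv ℂ Ψ (q - (M (z q)).mulVec (star q), z q) ((Pi.single k 1 : Fin m → ℂ), 0))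
            - fderiv ℂ Ψ (q - (M (z q)).mulVec (star q), z q) ((Pi.single i 1 : Fin m → ℂ), 0))
        - Complex.I * ((deriv (fun ζ => Ψ (q - (M ζ).mulVec (star q), ζ)) (z q))⁻¹
          * (-Complex.I * (∑ k, M (z q) k i
                * fderiv ℂ Ψ (q - (M (z q)).mulVec (star q), z q) ((Pi.single k 1 : Fin m → ℂ), 0))
            - Complex.I
              * fderiv ℂ Ψ (q - (M (z q)).mulVec (star q), z q) ((Pi.single i 1 : Fin m → ℂ), 0))))
        = -2 * (deriv (fun ζ => Ψ (q - (M ζ).mulVec (star q), ζ)) (z q))⁻¹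
            * (M (z q) i j
              * fderiv ℂ Ψ (q - (M (z q)).mulVec (star q), z q) ((Pi.single i 1 : Fin m → ℂ), 0))
      from by
        linear_combination (M (z q) i j
          * (deriv (fun ζ => Ψ (q - (M ζ).mulVec (star q), ζ)) (z q))⁻¹
          * ((∑ k, M (z q) k i
              * fderiv ℂ Ψ (q - (M (z q)).mulVec (star q), z q) ((Pi.single k 1 : Fin m → ℂ), 0))
            + fderiv ℂ Ψ (q - (M (z q)).mulVec (star q), z q) ((Pi.single i 1 : Fin m → ℂ), 0)))
          * hI]
    rw [show ∑ i, (-2 * (deriv (fun ζ => Ψ (q - (M ζ).mulVec (star q), ζ)) (z q))⁻¹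
          * (M (z q) i j
            * fderiv ℂ Ψ (q - (M (z q)).mulVec (star q), z q) ((Pi.single i 1 : Fin m → ℂ), 0)))
        = -2 * (deriv (fun ζ => Ψ (q - (M ζ).mulVec (star q), ζ)) (z q))⁻¹
          * ∑ i, M (z q) i j
            * fderiv ℂ Ψ (q - (M (z q)).mulVec (star q), z q) ((Pi.single i 1 : Fin m → ℂ), 0)
      from by rw [Finset.mul_sum]]
    linear_combination (-((deriv (fun ζ => Ψ (q - (M ζ).mulVec (star q), ζ)) (z q))⁻¹
      * ((∑ i, M (z q) i j
          * fderiv ℂ Ψ (q - (M (z q)).mulVec (star q), z q) ((Pi.single i 1 : Fin m → ℂ), 0))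
        + fderiv ℂ Ψ (q - (M (z q)).mulVec (star q), z q) ((Pi.single j 1 : Fin m → ℂ), 0)))) * hI
  ----------------------------------------------------------------
  ----------------------------------------------------------------
  -- Part 1 : horizontal weak conformality
  ----------------------------------------------------------------
  have hI : Complex.I * Complex.I = -1 := Complex.I_mul_I
  have part1 : ∑ j, ((fderiv ℝ z q₀ (Pi.single j 1)) ^ 2
      + (fderiv ℝ z q₀ (Pi.single j Complex.I)) ^ 2) = 0 := by
    have h1 : ∀ j : Fin m, (fderiv ℝ z q₀ (Pi.single j 1)) ^ 2
        + (fderiv ℝ z q₀ (Pi.single j Complex.I)) ^ 2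
        = ∑ i, -(M (z q₀) i j * ((fderiv ℝ z q₀ (Pi.single i 1)
              - Complex.I * fderiv ℝ z q₀ (Pi.single i Complex.I))
            * (fderiv ℝ z q₀ (Pi.single j 1)
              - Complex.I * fderiv ℝ z q₀ (Pi.single j Complex.I)))) := by
      intro j
      have hk := key q₀ hq₀ j
      have h2 : (fderiv ℝ z q₀ (Pi.single j 1)) ^ 2
          + (fderiv ℝ z q₀ (Pi.single j Complex.I)) ^ 2
          = (fderiv ℝ z q₀ (Pi.single j 1)
              + Complex.I * fderiv ℝ z q₀ (Pi.single j Complex.I))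
            * (fderiv ℝ z q₀ (Pi.single j 1)
              - Complex.I * fderiv ℝ z q₀ (Pi.single j Complex.I)) := by
        linear_combination (fderiv ℝ z q₀ (Pi.single j Complex.I))^2 * hI
      rw [h2]
      rw [show fderiv ℝ z q₀ (Pi.single j 1)
            + Complex.I * fderiv ℝ z q₀ (Pi.single j Complex.I)
          = -∑ i, M (z q₀) i j * (fderiv ℝ z q₀ (Pi.single i 1)
              - Complex.I * fderiv ℝ z q₀ (Pi.single i Complex.I)) from by
        linear_combination hk]
      rw [neg_mul, Finset.sum_mul, ← Finset.sum_neg_distrib]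
      exact Finset.sum_congr rfl fun x _ => by ring
    rw [Finset.sum_congr rfl fun j _ => h1 j]
    apply wz_sum_antisym
    intro j i
    rw [hManti' (z q₀) j i]
    ring
  refine ⟨part1, ?_⟩
  ----------------------------------------------------------------
  -- Part 2 : harmonicity
  ----------------------------------------------------------------
  have hzq2 : ContDiffAt ℝ 2 z q₀ := hz.contDiffAt (hU.mem_nhds hq₀)
  have hfd1 : ContDiffAt ℝ 1 (fderiv ℝ z) q₀ := hzq2.fderiv_right (by norm_num)
  have hH : HasFDerivAt (fderiv ℝ z) (fderiv ℝ (fderiv ℝ z) q₀) q₀ :=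
    (hfd1.differentiableAt (by norm_num)).hasFDerivAt
  have hHsymm : ∀ u v : Fin m → ℂ,
      fderiv ℝ (fderiv ℝ z) q₀ u v = fderiv ℝ (fderiv ℝ z) q₀ v u := by
    intro u v
    refine second_derivative_symmetric_of_eventually (f := z) ?_ hH u v
    filter_upwards [hU.mem_nhds hq₀] with x hx using hz' x hx
  have hev : ∀ v : Fin m → ℂ, HasFDerivAt (fun p => fderiv ℝ z p v)
      ((ContinuousLinearMap.apply ℝ ℂ v).comp (fderiv ℝ (fderiv ℝ z) q₀)) q₀ := fun v =>
    (ContinuousLinearMap.apply ℝ ℂ v).hasFDerivAt.comp q₀ hH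
  have hfd_stmt : ∀ v u : Fin m → ℂ,
      fderiv ℝ (fun p => fderiv ℝ z p v) q₀ u = fderiv ℝ (fderiv ℝ z) q₀ u v := by
    intro v u
    rw [(hev v).fderiv]
    simp
  have hkey2 : ∀ (j : Fin m) (u : Fin m → ℂ),
      fderiv ℝ (fderiv ℝ z) q₀ u (Pi.single j 1)
        + Complex.I * fderiv ℝ (fderiv ℝ z) q₀ u (Pi.single j Complex.I)
        + ∑ i, ((M (z q₀) i j) * (fderiv ℝ (fderiv ℝ z) q₀ u (Pi.single i 1)
              - Complex.I * fderiv ℝ (fderiv ℝ z) q₀ u (Pi.single i Complex.I))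
            + (fderiv ℝ z q₀ (Pi.single i 1)
                - Complex.I * fderiv ℝ z q₀ (Pi.single i Complex.I))
              * (deriv (fun t => M t i j) (z q₀) * fderiv ℝ z q₀ u)) = 0 := by
    intro j u
    have hFD : HasFDerivAt (fun q =>
        fderiv ℝ z q (Pi.single j 1) + Complex.I * fderiv ℝ z q (Pi.single j Complex.I)
          + ∑ i, M (z q) i j * (fderiv ℝ z q (Pi.single i 1)
              - Complex.I * fderiv ℝ z q (Pi.single i Complex.I)))
        ((((ContinuousLinearMap.apply ℝ ℂ (Pi.single j 1)).comp (fderiv ℝ (fderiv ℝ z) q₀))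
          + Complex.I • ((ContinuousLinearMap.apply ℝ ℂ (Pi.single j Complex.I)).comp
              (fderiv ℝ (fderiv ℝ z) q₀)))
        + ∑ i, ((M (z q₀) i j) • (((ContinuousLinearMap.apply ℝ ℂ (Pi.single i 1)).comp
                (fderiv ℝ (fderiv ℝ z) q₀))
              - Complex.I • ((ContinuousLinearMap.apply ℝ ℂ (Pi.single i Complex.I)).comp
                  (fderiv ℝ (fderiv ℝ z) q₀)))
            + (fderiv ℝ z q₀ (Pi.single i 1)
                - Complex.I * fderiv ℝ z q₀ (Pi.single i Complex.I))
              • ((((1 : ℂ →L[ℂ] ℂ).smulRight (deriv (fun t => M t i j) (z q₀))).restrictScalars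
                  ℝ).comp (fderiv ℝ z q₀)))) q₀ := by
      refine HasFDerivAt.add (HasFDerivAt.add (hev _) ?_) ?_
      · exact (hev _).const_mul Complex.I
      · refine HasFDerivAt.fun_sum fun i _ => ?_
        exact (hMzD i j q₀ hq₀).mul ((hev _).sub ((hev _).const_mul Complex.I))
    have hF0 : HasFDerivAt (fun q =>
        fderiv ℝ z q (Pi.single j 1) + Complex.I * fderiv ℝ z q (Pi.single j Complex.I)
          + ∑ i, M (z q) i j * (fderiv ℝ z q (Pi.single i 1)
              - Complex.I * fderiv ℝ z q (Pi.single i Complex.I)))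
        (0 : (Fin m → ℂ) →L[ℝ] ℂ) q₀ := by
      refine (hasFDerivAt_const (0:ℂ) q₀).congr_of_eventuallyEq ?_
      exact Filter.eventuallyEq_of_mem (hU.mem_nhds hq₀) (fun x hx => key x hx j)
    have huniq := hFD.unique hF0
    have happ := ContinuousLinearMap.ext_iff.mp huniq u
    simp only [ContinuousLinearMap.add_apply, ContinuousLinearMap.sum_apply,
      ContinuousLinearMap.smul_apply, ContinuousLinearMap.coe_comp', Function.comp_apply,
      ContinuousLinearMap.apply_apply, ContinuousLinearMap.coe_sub', Pi.sub_apply,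
      ContinuousLinearMap.coe_restrictScalars', ContinuousLinearMap.smulRight_apply,
      ContinuousLinearMap.one_apply, smul_eq_mul, ContinuousLinearMap.zero_apply] at happ
    rw [← happ]
    refine congrArg₂ _ rfl (Finset.sum_congr rfl fun i _ => ?_)
    ring
  -- rewrite the goal in terms of the second derivative
  have hgoal_rw : ∀ j : Fin m,
      fderiv ℝ (fun p => fderiv ℝ z p (Pi.single j 1)) q₀ (Pi.single j 1)
        + fderiv ℝ (fun p => fderiv ℝ z p (Pi.single j Complex.I)) q₀ (Pi.single j Complex.I)
      = fderiv ℝ (fderiv ℝ z) q₀ (Pi.single j 1) (Pi.single j 1)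
        + fderiv ℝ (fderiv ℝ z) q₀ (Pi.single j Complex.I) (Pi.single j Complex.I) := by
    intro j
    rw [hfd_stmt, hfd_stmt]
  rw [Finset.sum_congr rfl fun j _ => hgoal_rw j]
  -- the combined second-order identity
  have hcomb : ∀ j : Fin m,
      fderiv ℝ (fderiv ℝ z) q₀ (Pi.single j 1) (Pi.single j 1)
        + fderiv ℝ (fderiv ℝ z) q₀ (Pi.single j Complex.I) (Pi.single j Complex.I)
      = ∑ i, (-(deriv (fun t => M t i j) (z q₀)
            * ((fderiv ℝ z q₀ (Pi.single i 1)
                - Complex.I * fderiv ℝ z q₀ (Pi.single i Complex.I))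
              * (fderiv ℝ z q₀ (Pi.single j 1)
                - Complex.I * fderiv ℝ z q₀ (Pi.single j Complex.I))))
          - M (z q₀) i j * ((fderiv ℝ (fderiv ℝ z) q₀ (Pi.single j 1) (Pi.single i 1)
              - fderiv ℝ (fderiv ℝ z) q₀ (Pi.single j Complex.I) (Pi.single i Complex.I))
            - Complex.I * fderiv ℝ (fderiv ℝ z) q₀ (Pi.single j 1) (Pi.single i Complex.I)
            - Complex.I * fderiv ℝ (fderiv ℝ z) q₀ (Pi.single j Complex.I) (Pi.single i 1))) := by
    intro j
    have h1 := hkey2 j (Pi.single j 1)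
    have h2 := hkey2 j (Pi.single j Complex.I)
    have hsym := hHsymm (Pi.single j 1) (Pi.single j Complex.I)
    -- push the I-multiple inside the sum of h2
    have h2' : Complex.I * fderiv ℝ (fderiv ℝ z) q₀ (Pi.single j Complex.I) (Pi.single j 1)
        + Complex.I * (Complex.I
            * fderiv ℝ (fderiv ℝ z) q₀ (Pi.single j Complex.I) (Pi.single j Complex.I))
        + ∑ i, Complex.I * ((M (z q₀) i j)
              * (fderiv ℝ (fderiv ℝ z) q₀ (Pi.single j Complex.I) (Pi.single i 1)
              - Complex.I * fderiv ℝ (fderiv ℝ z) q₀ (Pi.single j Complex.I)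
                  (Pi.single i Complex.I))
            + (fderiv ℝ z q₀ (Pi.single i 1)
                - Complex.I * fderiv ℝ z q₀ (Pi.single i Complex.I))
              * (deriv (fun t => M t i j) (z q₀)
                * fderiv ℝ z q₀ (Pi.single j Complex.I))) = 0 := by
      rw [← Finset.mul_sum]
      linear_combination Complex.I * h2
    have hg : ∀ i : Fin m,
        (-(deriv (fun t => M t i j) (z q₀)
            * ((fderiv ℝ z q₀ (Pi.single i 1)
                - Complex.I * fderiv ℝ z q₀ (Pi.single i Complex.I))
              * (fderiv ℝ z q₀ (Pi.single j 1)
                - Complex.I * fderiv ℝ z q₀ (Pi.single j Complex.I))))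
          - M (z q₀) i j * ((fderiv ℝ (fderiv ℝ z) q₀ (Pi.single j 1) (Pi.single i 1)
              - fderiv ℝ (fderiv ℝ z) q₀ (Pi.single j Complex.I) (Pi.single i Complex.I))
            - Complex.I * fderiv ℝ (fderiv ℝ z) q₀ (Pi.single j 1) (Pi.single i Complex.I)
            - Complex.I * fderiv ℝ (fderiv ℝ z) q₀ (Pi.single j Complex.I) (Pi.single i 1)))
        = -(((M (z q₀) i j) * (fderiv ℝ (fderiv ℝ z) q₀ (Pi.single j 1) (Pi.single i 1)
              - Complex.I * fderiv ℝ (fderiv ℝ z) q₀ (Pi.single j 1) (Pi.single i Complex.I))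
            + (fderiv ℝ z q₀ (Pi.single i 1)
                - Complex.I * fderiv ℝ z q₀ (Pi.single i Complex.I))
              * (deriv (fun t => M t i j) (z q₀) * fderiv ℝ z q₀ (Pi.single j 1)))
          - Complex.I * ((M (z q₀) i j)
              * (fderiv ℝ (fderiv ℝ z) q₀ (Pi.single j Complex.I) (Pi.single i 1)
              - Complex.I * fderiv ℝ (fderiv ℝ z) q₀ (Pi.single j Complex.I)
                  (Pi.single i Complex.I))
            + (fderiv ℝ z q₀ (Pi.single i 1)
                - Complex.I * fderiv ℝ z q₀ (Pi.single i Complex.I))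
              * (deriv (fun t => M t i j) (z q₀)
                * fderiv ℝ z q₀ (Pi.single j Complex.I)))) := by
      intro i
      linear_combination (M (z q₀) i j
        * fderiv ℝ (fderiv ℝ z) q₀ (Pi.single j Complex.I) (Pi.single i Complex.I)) * hI
    rw [Finset.sum_congr rfl fun i _ => hg i, Finset.sum_neg_distrib, Finset.sum_sub_distrib]
    linear_combination h1 - h2' - Complex.I * hsym
      + fderiv ℝ (fderiv ℝ z) q₀ (Pi.single j Complex.I) (Pi.single j Complex.I) * hI
  rw [Finset.sum_congr rfl fun j _ => hcomb j]
  apply wz_sum_antisym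
  intro j i
  rw [hManti' (z q₀) j i, hMdanti (z q₀) j i]
  rw [hHsymm (Pi.single j 1) (Pi.single i 1),
    hHsymm (Pi.single j Complex.I) (Pi.single i Complex.I),
    hHsymm (Pi.single j 1) (Pi.single i Complex.I),
    hHsymm (Pi.single j Complex.I) (Pi.single i 1)]
  ring
end

section
/- Let U ⊆ ℂ^m be open, let z : U → ℂ be real-differentiable with Ψ̃(q, z(q)) = 0 for all q ∈ U, and let q₀ ∈ U with ∂Ψ̃/∂ζ(q₀, z(q₀)) ≠ 0. Then the real directional derivative of z at q₀ along the radial vector q₀ vanishes, i.e. (fderiv ℝ z q₀)(q₀) = 0, if and only if Σ_{i=1}^m w^i(q₀, z(q₀)) · (∂Ψ/∂w^i)(w(q₀, z(q₀)), z(q₀)) = 0, where ∂Ψ/∂w^i denotes the complex partial derivative of Ψ with respect to its i-th first-group variable. -/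
/-!
Since `M(ζ) q̄` is only conjugate-linear in `q`, the map `q ↦ w(q, ζ)` is homogeneous of degree
one under *real* scalings. Along the ray `t ↦ t • q₀` the identity `Ψ̃(q, z(q)) = 0` therefore reads
`Ψ(t • w(q₀, ζ(t)), ζ(t)) = 0` with `ζ(t) = z(t • q₀)`. Differentiating at `t = 1` gives
`Σᵢ wⁱ ∂Ψ/∂wⁱ + ζ'(1) · ∂Ψ̃/∂ζ = 0`, and `ζ'(1)` is the radial derivative of `z` at `q₀`.
-/

open Matrix

theorem ContinuousLinearMap.apply_prodMk_zero_eq_sum {𝕜 ι E F : Type*} [NontriviallyNormedField 𝕜]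
    [Fintype ι] [DecidableEq ι] [NormedAddCommGroup E] [NormedSpace 𝕜 E]
    [NormedAddCommGroup F] [NormedSpace 𝕜 F] (L : (ι → 𝕜) × E →L[𝕜] F) (w : ι → 𝕜) :
    L (w, 0) = ∑ i, w i • L (Pi.single i 1, 0) := by
  conv_lhs => rw [pi_eq_sum_univ' w]
  have hinl : ∀ x, L (x, 0) = L.comp (ContinuousLinearMap.inl 𝕜 (ι → 𝕜) E) x := fun _ => rfl
  simp only [hinl, map_sum, map_smul]

theorem Matrix.real_smul_sub_mulVec_star {n : Type*} [Fintype n] (A : Matrix n n ℂ) (r : ℝ)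
    (q : n → ℂ) : r • q - A *ᵥ star (r • q) = r • (q - A *ᵥ star q) := by
  rw [star_smul, star_trivial, mulVec_smul, smul_sub]

theorem differentiable_mulVec_const {𝕜 E n : Type*} [NontriviallyNormedField 𝕜]
    [NormedAddCommGroup E] [NormedSpace 𝕜 E] [Fintype n] {A : E → Matrix n n 𝕜}
    (hA : ∀ i j, Differentiable 𝕜 fun x => A x i j) (v : n → 𝕜) :
    Differentiable 𝕜 fun x => A x *ᵥ v :=
  differentiable_pi.2 fun i => Differentiable.fun_sum fun j _ => (hA i j).mul_const (v j)

theorem hasDerivAt_apply_smul_prodMk {E : Type*} [NormedAddCommGroup E] [NormedSpace ℂ E]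
    {Ψ : E × ℂ → ℂ} {c : ℂ → E} {ζ : ℝ → ℂ} {η : ℂ}
    (hΨ : DifferentiableAt ℂ Ψ (c (ζ 1), ζ 1)) (hc : DifferentiableAt ℂ c (ζ 1))
    (hζ : HasDerivAt ζ η 1) :
    HasDerivAt (fun t : ℝ => Ψ (t • c (ζ t), ζ t))
      (fderiv ℂ Ψ (c (ζ 1), ζ 1) (c (ζ 1), 0) + η * deriv (fun s => Ψ (c s, s)) (ζ 1)) 1 := by
  set L := fderiv ℂ Ψ (c (ζ 1), ζ 1)
  have hcζ : HasDerivAt (fun t : ℝ => c (ζ t)) (η • deriv c (ζ 1)) 1 :=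
    hc.hasDerivAt.scomp 1 hζ
  have hsmul : HasDerivAt (fun t : ℝ => t • c (ζ t)) (c (ζ 1) + η • deriv c (ζ 1)) 1 := by
    simpa [add_comm] using (hasDerivAt_id' (1 : ℝ)).fun_smul hcζ
  have hdiag : deriv (fun s => Ψ (c s, s)) (ζ 1) = L (deriv c (ζ 1), 1) :=
    (hΨ.hasFDerivAt.comp_hasDerivAt (f := fun s => (c s, s)) (ζ 1)
      (hc.hasDerivAt.prodMk (hasDerivAt_id' _))).deriv
  have hsplit : (c (ζ 1) + η • deriv c (ζ 1), η) =
      (c (ζ 1), (0 : ℂ)) + η • (deriv c (ζ 1), 1) := by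
    ext <;> simp
  rw [hdiag, ← smul_eq_mul, ← map_smul, ← map_add, ← hsplit]
  exact (hΨ.hasFDerivAt.restrictScalars ℝ).comp_hasDerivAt_of_eq 1 (hsmul.prodMk hζ)
    (by simp)

open Filter Topology in
theorem radial_invariance_iff_euler_sum_general
    (m : ℕ)
    (M : ℂ → Matrix (Fin m) (Fin m) ℂ)
    (hM : ∀ i j, Differentiable ℂ (fun ζ => M ζ i j))
    (Ψ : ((Fin m → ℂ) × ℂ) → ℂ) (hΨ : Differentiable ℂ Ψ)
    (U : Set (Fin m → ℂ)) (hU : IsOpen U)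
    (z : (Fin m → ℂ) → ℂ) (hz : DifferentiableOn ℝ z U)
    (hsol : ∀ q ∈ U, Ψ (q - (M (z q)).mulVec (star q), z q) = 0)
    (q₀ : Fin m → ℂ) (hq₀ : q₀ ∈ U)
    (hreg : deriv (fun ζ => Ψ (q₀ - (M ζ).mulVec (star q₀), ζ)) (z q₀) ≠ 0) :
    fderiv ℝ z q₀ q₀ = 0 ↔
      ∑ i, (q₀ - (M (z q₀)).mulVec (star q₀)) i *
        fderiv ℂ Ψ (q₀ - (M (z q₀)).mulVec (star q₀), z q₀) (Pi.single i 1, 0) = 0 := by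
  have hray : HasDerivAt (fun t : ℝ => t • q₀) q₀ 1 := by
    simpa using (hasDerivAt_id' (1 : ℝ)).smul_const q₀
  have hzray : HasDerivAt (fun t : ℝ => z (t • q₀)) (fderiv ℝ z q₀ q₀) 1 :=
    (hz.differentiableAt (hU.mem_nhds hq₀)).hasFDerivAt.comp_hasDerivAt_of_eq 1 hray
      (one_smul ℝ q₀).symm
  have hderiv := hasDerivAt_apply_smul_prodMk (c := fun ζ => q₀ - M ζ *ᵥ star q₀) (hΨ _)
    ((differentiable_mulVec_const hM _).const_sub q₀ _) hzray
  simp only [one_smul] at hderiv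
  have hvanish :
      (fun t : ℝ => Ψ (t • (q₀ - M (z (t • q₀)) *ᵥ star q₀), z (t • q₀))) =ᶠ[𝓝 1] 0 := by
    filter_upwards [hray.continuousAt.preimage_mem_nhds (by simpa using hU.mem_nhds hq₀)]
      with t ht
    rw [← Matrix.real_smul_sub_mulVec_star]
    exact hsol _ ht
  have key := hderiv.deriv.symm.trans (hvanish.deriv_eq.trans (deriv_const 1 0))
  rw [ContinuousLinearMap.apply_prodMk_zero_eq_sum] at key
  simp only [smul_eq_mul] at key
  constructor
  · intro h
    rwa [h, zero_mul, add_zero] at key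
  · intro h
    rw [h, zero_add] at key
    exact (mul_eq_zero.1 key).resolve_right hreg

/-- Lemma 4.1 of the paper (pointwise form). For a real-differentiable
solution `z` of `Ψ̃(q, z(q)) = Ψ(q − M(z(q))·q̄, z(q)) = 0` with nonvanishing
`ζ`-derivative at `q₀`, the radial directional derivative `(fderiv ℝ z q₀)(q₀)`
vanishes iff `Σᵢ wⁱ(q₀, z(q₀)) · (∂Ψ/∂wⁱ)` vanishes at `(w(q₀, z(q₀)), z(q₀))`. -/
theorem radial_invariance_iff_euler_sum
    (m : ℕ) (hm : 2 ≤ m)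
    (M : ℂ → Matrix (Fin m) (Fin m) ℂ)
    (hM : ∀ i j, Differentiable ℂ (fun ζ => M ζ i j))
    (hManti : ∀ ζ, (M ζ)ᵀ = -(M ζ))
    (Ψ : ((Fin m → ℂ) × ℂ) → ℂ) (hΨ : Differentiable ℂ Ψ)
    (U : Set (Fin m → ℂ)) (hU : IsOpen U)
    (z : (Fin m → ℂ) → ℂ) (hz : DifferentiableOn ℝ z U)
    (hsol : ∀ q ∈ U, Ψ (q - (M (z q)).mulVec (star q), z q) = 0)
    (q₀ : Fin m → ℂ) (hq₀ : q₀ ∈ U)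
    (hreg : deriv (fun ζ => Ψ (q₀ - (M ζ).mulVec (star q₀), ζ)) (z q₀) ≠ 0) :
    fderiv ℝ z q₀ q₀ = 0 ↔
      ∑ i, (q₀ - (M (z q₀)).mulVec (star q₀)) i *
        fderiv ℂ Ψ (q₀ - (M (z q₀)).mulVec (star q₀), z q₀) (Pi.single i 1, 0) = 0 :=
  radial_invariance_iff_euler_sum_general m M hM Ψ hΨ U hU z hz hsol q₀ hq₀ hreg
end

section
/- Let m ≥ 1 and let Ψ ∈ ℂ[w₁,…,w_m] be an irreducible polynomial such that for every point a ∈ ℂ^m with Ψ(a) = 0 one has Σ_{i=1}^m a_i · (∂Ψ/∂w_i)(a) = 0. Then Ψ is homogeneous, i.e. all monomials of Ψ with nonzero coefficient have the same total degree. -/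
/-!
The Euler operator `E = ∑ᵢ Xᵢ ∂ᵢ` multiplies each monomial by its total degree.
The hypothesis says that `E Ψ` vanishes on the zero set of `Ψ`, so by the Nullstellensatz
the irreducible `Ψ` divides `E Ψ`. Since `E` does not raise the total degree, the quotient
is a constant `c`, and comparing coefficients in `E Ψ = c Ψ` shows that every monomial
of `Ψ` has degree `c`.
-/

open MvPolynomial

namespace MvPolynomial

variable {σ R : Type*}

theorem dvd_of_forall_eval_eq_zero {k : Type*} [Field k] [IsAlgClosed k] [Finite σ]
    {p q : MvPolynomial σ k} (hp : Irreducible p) (h : ∀ x, eval x p = 0 → eval x q = 0) :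
    p ∣ q := by
  have hprime : (Ideal.span {p}).IsPrime :=
    (Ideal.span_singleton_prime hp.ne_zero).mpr hp.prime
  rw [← Ideal.mem_span_singleton, ← hprime.radical,
    ← vanishingIdeal_zeroLocus_eq_radical (K := k)]
  exact fun x hx => h x (hx p (Ideal.subset_span rfl))

variable [Fintype σ]

theorem coeff_sum_X_mul_pderiv [CommSemiring R] (p : MvPolynomial σ R) (d : σ →₀ ℕ) :
    coeff d (∑ i, X i * pderiv i p) = d.degree * coeff d p := by
  induction p using MvPolynomial.induction_on' with
  | monomial e r =>
    classical
    simp_rw [X_mul_pderiv_monomial, ← Finset.sum_smul, coeff_smul, coeff_monomial]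
    split_ifs with h
    · rw [h, Finsupp.degree_eq_sum, nsmul_eq_mul]
    · simp
  | add p q hp hq => simp only [map_add, mul_add, Finset.sum_add_distrib, coeff_add, hp, hq]

theorem totalDegree_sum_X_mul_pderiv_le [CommSemiring R] (p : MvPolynomial σ R) :
    (∑ i, X i * pderiv i p).totalDegree ≤ p.totalDegree := by
  refine totalDegree_le_of_support_subset fun d hd => ?_
  rw [mem_support_iff, coeff_sum_X_mul_pderiv] at hd
  exact mem_support_iff.mpr (right_ne_zero_of_mul hd)

theorem exists_sum_X_mul_pderiv_eq_C_mul_of_dvd [CommRing R] [IsDomain R]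
    {p : MvPolynomial σ R} (h : p ∣ ∑ i, X i * pderiv i p) :
    ∃ c : R, ∑ i, X i * pderiv i p = C c * p := by
  obtain ⟨q, hq⟩ := h
  rcases eq_or_ne p 0 with rfl | hp
  · exact ⟨0, by simp⟩
  rcases eq_or_ne q 0 with rfl | hq0
  · exact ⟨0, by simp [hq]⟩
  have hq_const : q.totalDegree = 0 := by
    have := totalDegree_sum_X_mul_pderiv_le p
    rw [hq, totalDegree_mul_of_isDomain hp hq0] at this
    omega
  exact ⟨q.coeff 0, by rw [hq, mul_comm, ← totalDegree_eq_zero_iff_eq_C.mp hq_const]⟩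

theorem exists_isHomogeneous_of_sum_X_mul_pderiv_eq_C_mul [CommRing R] [IsDomain R] [CharZero R]
    {p : MvPolynomial σ R} {c : R} (h : ∑ i, X i * pderiv i p = C c * p) :
    ∃ n, p.IsHomogeneous n := by
  rcases eq_or_ne p 0 with rfl | hp
  · exact ⟨0, isHomogeneous_zero _ _ _⟩
  have hdeg : ∀ d ∈ p.support, (d.degree : R) = c := fun d hd => by
    have := congrArg (coeff d) h
    rw [coeff_sum_X_mul_pderiv, coeff_C_mul] at this
    exact mul_right_cancel₀ (mem_support_iff.mp hd) this
  obtain ⟨d₀, hd₀⟩ := support_nonempty.mpr hp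
  refine ⟨d₀.degree, fun d hd => ?_⟩
  change Finsupp.weight (fun _ ↦ 1) d = _
  rw [← Finsupp.degree_eq_weight_one]
  exact_mod_cast (hdeg d (mem_support_iff.mpr hd)).trans (hdeg d₀ hd₀).symm

end MvPolynomial

theorem conditionH_implies_homogeneous_general
    (m : ℕ) (Ψ : MvPolynomial (Fin m) ℂ)
    (hirr : Irreducible Ψ)
    (hH : ∀ a : Fin m → ℂ, MvPolynomial.eval a Ψ = 0 →
      ∑ i, a i * MvPolynomial.eval a (MvPolynomial.pderiv i Ψ) = 0) :
    ∃ n : ℕ, Ψ.IsHomogeneous n := by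
  have hdvd : Ψ ∣ ∑ i, X i * pderiv i Ψ :=
    dvd_of_forall_eval_eq_zero hirr fun a ha => by simpa using hH a ha
  obtain ⟨c, hc⟩ := exists_sum_X_mul_pderiv_eq_C_mul_of_dvd hdvd
  exact exists_isHomogeneous_of_sum_X_mul_pderiv_eq_C_mul hc

/-- Proposition 4.3 of the paper. An irreducible polynomial
`Ψ ∈ ℂ[w₁,…,w_m]` such that `Σᵢ aᵢ·(∂Ψ/∂wᵢ)(a) = 0` at every zero `a` of `Ψ`
is homogeneous. -/
theorem conditionH_implies_homogeneous
    (m : ℕ) (hm : 1 ≤ m) (Ψ : MvPolynomial (Fin m) ℂ)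
    (hirr : Irreducible Ψ)
    (hH : ∀ a : Fin m → ℂ, MvPolynomial.eval a Ψ = 0 →
      ∑ i, a i * MvPolynomial.eval a (MvPolynomial.pderiv i Ψ) = 0) :
    ∃ n : ℕ, Ψ.IsHomogeneous n :=
  conditionH_implies_homogeneous_general m Ψ hirr hH
end

section
/- Let U ⊆ ℂ³ ≅ ℝ⁶ be open and let z : U → ℂ be a C² function such that for all q = (q¹, q², q³) ∈ U: z(q)²·q̄¹·(q̄² + q̄³) + z(q)·[ q̄¹ + q²·(q̄² + q̄³) − |q¹|² ] + (q³ − q¹·q²) = 0, and moreover 2·z(q)·q̄¹·(q̄² + q̄³) + q̄¹ + q²·(q̄² + q̄³) − |q¹|² ≠ 0 (nonvanishing of the ζ-derivative of the left-hand side at ζ = z(q)). Then z is a harmonic morphism: Σ_{j=1}^{6} (∂z/∂x^j)² = 0 and Σ_{j=1}^{6} ∂²z/(∂x^j)² = 0 at every point of U. -/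
/-!
With `J = fibreMatrix` and `Ψ(w, ζ) = w¹w² − w³`, the equation says `Ψ(q + z J q̄, z) = 0`.
Differentiating it, the nonvanishing `ζ`-derivative gives the first-order relation
`∂z/∂q̄ = z Jᵀ ∂z/∂q`. As `Jᵀ` is skew-symmetric, `∑ⱼ ∂ⱼz ∂̄ⱼz = z ⟨∂z, Jᵀ ∂z⟩ = 0`, which is
`∑ⱼ (∂z/∂xʲ)² = 0`. Applying `∂ⱼ` to the relation and summing,
`Δz / 4 = ∑ⱼ ∂ⱼ∂̄ⱼz = ∑ⱼₖ Jᵀⱼₖ (∂ⱼz ∂ₖz + z ∂ⱼ∂ₖz)`, which vanishes because the bracket is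
symmetric in `j, k` (symmetry of second derivatives of a `C²` function).
-/

open Complex Matrix Filter Topology

noncomputable section

lemma Matrix.sum_sum_mul_eq_zero_of_transpose_eq_neg {ι R : Type*} [Fintype ι] [Ring R]
    [IsAddTorsionFree R] {A : Matrix ι ι R} (hA : Aᵀ = -A) {X : ι → ι → R}
    (hX : ∀ j k, X j k = X k j) :
    ∑ j, ∑ k, A k j * X j k = 0 := by
  have h : ∑ j, ∑ k, A k j * X j k = ∑ j, ∑ k, -(A k j * X j k) := by
    rw [Finset.sum_comm]
    refine Finset.sum_congr rfl fun j _ => Finset.sum_congr rfl fun k _ => ?_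
    rw [hX, ← neg_mul, ← neg_apply, ← hA, transpose_apply]
  simpa only [Finset.sum_neg_distrib, self_eq_neg] using h

variable {ι : Type*} [Fintype ι] [DecidableEq ι]

section Wirtinger

/-- Twice the Wirtinger derivatives `∂/∂qʲ` (and, below, `∂/∂q̄ʲ`) of a real-linear map
`ℂ^ι → ℂ`. -/
def wirtinger (j : ι) : ((ι → ℂ) →L[ℝ] ℂ) →L[ℝ] ℂ :=
  ContinuousLinearMap.apply ℝ ℂ (Pi.single j 1) - I • ContinuousLinearMap.apply ℝ ℂ (Pi.single j I)

def wirtingerBar (j : ι) : ((ι → ℂ) →L[ℝ] ℂ) →L[ℝ] ℂ :=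
  ContinuousLinearMap.apply ℝ ℂ (Pi.single j 1) + I • ContinuousLinearMap.apply ℝ ℂ (Pi.single j I)

@[simp]
lemma wirtinger_apply (j : ι) (L : (ι → ℂ) →L[ℝ] ℂ) :
    wirtinger j L = L (Pi.single j 1) - I * L (Pi.single j I) :=
  rfl

@[simp]
lemma wirtingerBar_apply (j : ι) (L : (ι → ℂ) →L[ℝ] ℂ) :
    wirtingerBar j L = L (Pi.single j 1) + I * L (Pi.single j I) :=
  rfl

lemma wirtinger_smul (j : ι) (c : ℂ) (L : (ι → ℂ) →L[ℝ] ℂ) :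
    wirtinger j (c • L) = c * wirtinger j L := by
  simp only [wirtinger_apply, _root_.smul_apply, smul_eq_mul]
  ring

section OfApply

variable {L : (ι → ℂ) →L[ℝ] ℂ} {a b : ι → ℂ}

lemma wirtinger_eq_of_forall_apply_eq (hL : ∀ v, L v = a ⬝ᵥ v + b ⬝ᵥ star v) (j : ι) :
    wirtinger j L = 2 * a j := by
  simp only [wirtinger_apply, hL, dotProduct_single, ← Pi.single_star, star_one, Complex.star_def,
    conj_I]
  linear_combination (-(a j) + b j) * I_sq

lemma wirtingerBar_eq_of_forall_apply_eq (hL : ∀ v, L v = a ⬝ᵥ v + b ⬝ᵥ star v) (j : ι) :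
    wirtingerBar j L = 2 * b j := by
  simp only [wirtingerBar_apply, hL, dotProduct_single, ← Pi.single_star, star_one, Complex.star_def,
    conj_I]
  linear_combination (a j - b j) * I_sq

end OfApply

lemma sum_sq_apply_eq_sum_wirtinger_mul_wirtingerBar (L : (ι → ℂ) →L[ℝ] ℂ) :
    ∑ j, (L (Pi.single j 1) ^ 2 + L (Pi.single j I) ^ 2) =
      ∑ j, wirtinger j L * wirtingerBar j L := by
  refine Finset.sum_congr rfl fun j _ => ?_
  simp only [wirtinger_apply, wirtingerBar_apply]
  linear_combination (L (Pi.single j I)) ^ 2 * I_sq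

variable {B : (ι → ℂ) →L[ℝ] (ι → ℂ) →L[ℝ] ℂ}

lemma wirtinger_comp_wirtinger_comm (hB : ∀ v w, B v w = B w v) (j k : ι) :
    wirtinger j ((wirtinger k).comp B) = wirtinger k ((wirtinger j).comp B) := by
  simp only [wirtinger_apply, ContinuousLinearMap.comp_apply]
  rw [hB (Pi.single j 1), hB (Pi.single j I) (Pi.single k 1), hB (Pi.single j 1) (Pi.single k I),
    hB (Pi.single j I) (Pi.single k I)]
  ring

lemma sum_apply_apply_eq_sum_wirtinger_comp_wirtingerBar (hB : ∀ v w, B v w = B w v) :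
    ∑ j, (B (Pi.single j 1) (Pi.single j 1) + B (Pi.single j I) (Pi.single j I)) =
      ∑ j, wirtinger j ((wirtingerBar j).comp B) := by
  refine Finset.sum_congr rfl fun j _ => ?_
  simp only [wirtinger_apply, wirtingerBar_apply, ContinuousLinearMap.comp_apply]
  rw [hB (Pi.single j I) (Pi.single j 1)]
  linear_combination B (Pi.single j I) (Pi.single j I) * I_sq

end Wirtinger

section HarmonicMorphism

variable {A : Matrix ι ι ℂ}

lemma sum_sq_apply_eq_zero_of_wirtingerBar_eq (hA : Aᵀ = -A) {L : (ι → ℂ) →L[ℝ] ℂ} {c : ℂ}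
    (hL : ∀ j, wirtingerBar j L = c * ∑ k, A k j * wirtinger k L) :
    ∑ j, (L (Pi.single j 1) ^ 2 + L (Pi.single j I) ^ 2) = 0 := by
  have hskew := sum_sum_mul_eq_zero_of_transpose_eq_neg hA
    (X := fun j k => wirtinger j L * wirtinger k L) fun j k => mul_comm _ _
  rw [sum_sq_apply_eq_sum_wirtinger_mul_wirtingerBar, ← mul_zero c, ← hskew, Finset.mul_sum]
  refine Finset.sum_congr rfl fun j _ => ?_
  simp only [hL, Finset.mul_sum]
  exact Finset.sum_congr rfl fun k _ => by ring

variable {z : (ι → ℂ) → ℂ} {q : ι → ℂ}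

lemma wirtingerBar_comp_eq_of_hasFDerivAt {B : (ι → ℂ) →L[ℝ] (ι → ℂ) →L[ℝ] ℂ}
    (hz : DifferentiableAt ℝ z q) (hB : HasFDerivAt (fderiv ℝ z) B q)
    (hrel : ∀ᶠ p in 𝓝 q, ∀ j,
      wirtingerBar j (fderiv ℝ z p) = z p * ∑ k, A k j * wirtinger k (fderiv ℝ z p)) (j : ι) :
    (wirtingerBar j).comp B = z q • ∑ k, A k j • (wirtinger k).comp B
      + (∑ k, A k j * wirtinger k (fderiv ℝ z q)) • fderiv ℝ z q := by
  have hlhs := (wirtingerBar j).hasFDerivAt.comp q hB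
  have hrhs := hz.hasFDerivAt.mul (HasFDerivAt.fun_sum (u := Finset.univ) fun k _ =>
    ((wirtinger k).hasFDerivAt.comp q hB).const_mul (A k j))
  exact hlhs.unique (hrhs.congr_of_eventuallyEq (hrel.mono fun p hp => hp j))

lemma sum_fderiv_fderiv_eq_zero_of_wirtingerBar_eq (hA : Aᵀ = -A) (hz : ContDiffAt ℝ 2 z q)
    (hrel : ∀ᶠ p in 𝓝 q, ∀ j,
      wirtingerBar j (fderiv ℝ z p) = z p * ∑ k, A k j * wirtinger k (fderiv ℝ z p)) :
    ∑ j, (fderiv ℝ (fun p => fderiv ℝ z p (Pi.single j 1)) q (Pi.single j 1)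
      + fderiv ℝ (fun p => fderiv ℝ z p (Pi.single j I)) q (Pi.single j I)) = 0 := by
  set B := fderiv ℝ (fderiv ℝ z) q
  have hB : HasFDerivAt (fderiv ℝ z) B q :=
    ((hz.fderiv_right (m := 1) le_rfl).differentiableAt one_ne_zero).hasFDerivAt
  have hsymm : ∀ v w, B v w = B w v :=
    hz.isSymmSndFDerivAt (by simp [minSmoothness_of_isRCLikeNormedField])
  have hww := sum_sum_mul_eq_zero_of_transpose_eq_neg hA
    (X := fun j k => wirtinger j (fderiv ℝ z q) * wirtinger k (fderiv ℝ z q)) fun j k => mul_comm _ _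
  have hhess := sum_sum_mul_eq_zero_of_transpose_eq_neg hA
    (X := fun j k => wirtinger j ((wirtinger k).comp B)) (wirtinger_comp_wirtinger_comm hsymm)
  calc _ = ∑ j, wirtinger j ((wirtingerBar j).comp B) := by
        have hsecond : ∀ v w, fderiv ℝ (fun p => fderiv ℝ z p v) q w = B w v := fun v w => by
          simp [fderiv_clm_apply hB.differentiableAt (differentiableAt_const v), B]
        simp only [hsecond]
        exact sum_apply_apply_eq_sum_wirtinger_comp_wirtingerBar hsymm
    _ = z q * ∑ j, ∑ k, A k j * wirtinger j ((wirtinger k).comp B)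
          + ∑ j, ∑ k, A k j * (wirtinger j (fderiv ℝ z q) * wirtinger k (fderiv ℝ z q)) := by
        simp only [wirtingerBar_comp_eq_of_hasFDerivAt (hz.differentiableAt two_ne_zero) hB hrel,
          map_add, map_sum, wirtinger_smul, Finset.sum_add_distrib, Finset.mul_sum, Finset.sum_mul]
        congr 1
        all_goals exact Finset.sum_congr rfl fun j _ => Finset.sum_congr rfl fun k _ => by ring
    _ = 0 := by simp only [hww, hhess, mul_zero, add_zero]

end HarmonicMorphism

section Implicit

lemma ContinuousLinearMap.apply_eq_dotProduct (f : (ι → ℂ) →L[ℂ] ℂ) (x : ι → ℂ) :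
    f x = (fun k => f (Pi.single k 1)) ⬝ᵥ x := by
  conv_lhs => rw [← Finset.univ_sum_single x]
  simp only [map_sum, dotProduct]
  refine Finset.sum_congr rfl fun k _ => ?_
  rw [mul_comm, ← smul_eq_mul, ← map_smul, ← Pi.single_smul, smul_eq_mul, mul_one]

lemma wirtingerBar_fderiv_eq_of_implicit {G : (ι → ℂ) × ℂ → ℂ} (A : Matrix ι ι ℂ)
    {z : (ι → ℂ) → ℂ} {p : ι → ℂ}
    (hG : DifferentiableAt ℂ G (p + z p • A *ᵥ star p, z p)) (hz : DifferentiableAt ℝ z p)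
    (hsol : ∀ᶠ q in 𝓝 p, G (q + z q • A *ᵥ star q, z q) = 0)
    (hD : fderiv ℂ G (p + z p • A *ᵥ star p, z p) (A *ᵥ star p, 1) ≠ 0) (j : ι) :
    wirtingerBar j (fderiv ℝ z p) = z p * ∑ k, A k j * wirtinger k (fderiv ℝ z p) := by
  set G' := fderiv ℂ G (p + z p • A *ᵥ star p, z p)
  set D := G' (A *ᵥ star p, 1)
  set g := G'.comp (ContinuousLinearMap.inl ℂ (ι → ℂ) ℂ)
  set γ : ι → ℂ := fun k => g (Pi.single k 1)
  set S : (ι → ℂ) →L[ℝ] (ι → ℂ) := ((A.mulVecLin.restrictScalars ℝ).toContinuousLinearMap).comp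
    (starL' ℝ : (ι → ℂ) ≃L[ℝ] (ι → ℂ)).toContinuousLinearMap
  have hΦ := ((hasFDerivAt_id p).add (hz.hasFDerivAt.smul S.hasFDerivAt)).prodMk hz.hasFDerivAt
  have hzero := ((hG.hasFDerivAt.restrictScalars ℝ).comp p hΦ).unique
    ((hasFDerivAt_const 0 p).congr_of_eventuallyEq hsol)
  have hlin : ∀ v, D * fderiv ℝ z p v = -(γ ⬝ᵥ v) - z p * ((Aᵀ *ᵥ γ) ⬝ᵥ star v) := by
    intro v
    have h : G' ((v, 0) + z p • (A *ᵥ star v, 0) + fderiv ℝ z p v • (A *ᵥ star p, 1)) = 0 := by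
      have h0 := DFunLike.congr_fun hzero v
      rw [_root_.zero_apply, ContinuousLinearMap.comp_apply,
        ContinuousLinearMap.coe_restrictScalars'] at h0
      convert h0 using 2
      ext <;> simp [S, add_assoc]
    rw [map_add, map_add, map_smul, map_smul] at h
    change g v + z p • g (A *ᵥ star v) + fderiv ℝ z p v • D = 0 at h
    rw [g.apply_eq_dotProduct, g.apply_eq_dotProduct, dotProduct_mulVec, ← mulVec_transpose] at h
    linear_combination h
  have hdz : ∀ v, fderiv ℝ z p v = (-D⁻¹ • γ) ⬝ᵥ v + (-(D⁻¹ * z p) • (Aᵀ *ᵥ γ)) ⬝ᵥ star v := by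
    intro v
    simp only [smul_dotProduct, smul_eq_mul]
    field_simp
    linear_combination hlin v
  rw [wirtingerBar_eq_of_forall_apply_eq hdz]
  simp only [wirtinger_eq_of_forall_apply_eq hdz, Pi.smul_apply, smul_eq_mul, mulVec, dotProduct,
    transpose_apply, Finset.mul_sum]
  exact Finset.sum_congr rfl fun k _ => by ring

end Implicit

def psi (w : (Fin 3 → ℂ) × ℂ) : ℂ := w.1 0 * w.1 1 - w.1 2

/-- The Weierstrass data `μ₁ = μ₂ = ζ, μ₃ = 0` give the coordinates `w = q + ζ J q̄`, i.e.
`w¹ = q¹ − ζ(q̄² + q̄³)`, `w² = q² + ζq̄¹`, `w³ = q³ + ζq̄¹`. -/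
def fibreMatrix : Matrix (Fin 3) (Fin 3) ℂ := !![0, -1, -1; 1, 0, 0; 1, 0, 0]

lemma fibreMatrix_transpose : fibreMatrixᵀ = -fibreMatrix := by
  ext i j
  fin_cases i <;> fin_cases j <;> simp [fibreMatrix]

lemma fibreMatrix_mulVec (x : Fin 3 → ℂ) : fibreMatrix *ᵥ x = ![-(x 1 + x 2), x 0, x 0] := by
  ext i
  fin_cases i <;> simp [fibreMatrix, mulVec, dotProduct, Fin.sum_univ_three]
  ring

lemma psi_fibre (q : Fin 3 → ℂ) (ζ : ℂ) :
    psi (q + ζ • fibreMatrix *ᵥ star q, ζ) =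
      -(ζ ^ 2 * (starRingEnd ℂ) (q 0) * ((starRingEnd ℂ) (q 1) + (starRingEnd ℂ) (q 2))
        + ζ * ((starRingEnd ℂ) (q 0)
            + q 1 * ((starRingEnd ℂ) (q 1) + (starRingEnd ℂ) (q 2))
            - q 0 * (starRingEnd ℂ) (q 0))
        + (q 2 - q 0 * q 1)) := by
  simp [psi, fibreMatrix_mulVec]
  ring

lemma differentiable_psi : Differentiable ℂ psi := by
  unfold psi
  fun_prop

lemma fderiv_psi_apply (w x : (Fin 3 → ℂ) × ℂ) :
    fderiv ℂ psi w x = x.1 0 * w.1 1 + w.1 0 * x.1 1 - x.1 2 := by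
  let π (i : Fin 3) : (Fin 3 → ℂ) × ℂ →L[ℂ] ℂ :=
    (ContinuousLinearMap.proj i).comp (ContinuousLinearMap.fst ℂ _ ℂ)
  have h : HasFDerivAt psi (π 0 w • π 1 + π 1 w • π 0 - π 2) w :=
    ((π 0).hasFDerivAt.mul (π 1).hasFDerivAt).sub (π 2).hasFDerivAt
  rw [h.fderiv]
  simp [π]
  ring

lemma fderiv_psi_fibre (q : Fin 3 → ℂ) (ζ : ℂ) :
    fderiv ℂ psi (q + ζ • fibreMatrix *ᵥ star q, ζ) (fibreMatrix *ᵥ star q, 1) =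
      -(2 * ζ * (starRingEnd ℂ) (q 0) * ((starRingEnd ℂ) (q 1) + (starRingEnd ℂ) (q 2))
        + (starRingEnd ℂ) (q 0)
        + q 1 * ((starRingEnd ℂ) (q 1) + (starRingEnd ℂ) (q 2))
        - q 0 * (starRingEnd ℂ) (q 0)) := by
  simp [fderiv_psi_apply, fibreMatrix_mulVec, vecHead, vecTail]
  ring

/-- Example 3.6 of the paper. On a domain `U ⊆ ℂ³ ≅ ℝ⁶`, any C²
solution `z` of the quadratic equation
`z²·q̄¹(q̄² + q̄³) + z·(q̄¹ + q²(q̄² + q̄³) − |q¹|²) + (q³ − q¹q²) = 0`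
with nonvanishing `ζ`-derivative is a harmonic morphism. -/
theorem example_R6_quadratic_harmonic_morphism
    (U : Set (Fin 3 → ℂ)) (hU : IsOpen U)
    (z : (Fin 3 → ℂ) → ℂ) (hz : ContDiffOn ℝ 2 z U)
    (hsol : ∀ q ∈ U,
      (z q) ^ 2 * (starRingEnd ℂ) (q 0) * ((starRingEnd ℂ) (q 1) + (starRingEnd ℂ) (q 2))
        + z q * ((starRingEnd ℂ) (q 0)
            + q 1 * ((starRingEnd ℂ) (q 1) + (starRingEnd ℂ) (q 2))
            - q 0 * (starRingEnd ℂ) (q 0))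
        + (q 2 - q 0 * q 1) = 0)
    (hreg : ∀ q ∈ U,
      2 * z q * (starRingEnd ℂ) (q 0) * ((starRingEnd ℂ) (q 1) + (starRingEnd ℂ) (q 2))
        + (starRingEnd ℂ) (q 0)
        + q 1 * ((starRingEnd ℂ) (q 1) + (starRingEnd ℂ) (q 2))
        - q 0 * (starRingEnd ℂ) (q 0) ≠ 0) :
    ∀ q ∈ U,
      (∑ j, ((fderiv ℝ z q (Pi.single j 1)) ^ 2
            + (fderiv ℝ z q (Pi.single j Complex.I)) ^ 2) = 0) ∧
      (∑ j, (fderiv ℝ (fun p => fderiv ℝ z p (Pi.single j 1)) q (Pi.single j 1)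
            + fderiv ℝ (fun p => fderiv ℝ z p (Pi.single j Complex.I)) q
                (Pi.single j Complex.I)) = 0) := by
  have hrel : ∀ p ∈ U, ∀ j, wirtingerBar j (fderiv ℝ z p) =
      z p * ∑ k, fibreMatrix k j * wirtinger k (fderiv ℝ z p) := by
    intro p hp
    refine wirtingerBar_fderiv_eq_of_implicit fibreMatrix differentiable_psi.differentiableAt
      ((hz.contDiffAt (hU.mem_nhds hp)).differentiableAt two_ne_zero) ?_ ?_
    · filter_upwards [hU.mem_nhds hp] with q hq
      rw [psi_fibre, hsol q hq, neg_zero]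
    · rw [fderiv_psi_fibre]
      exact neg_ne_zero.mpr (hreg p hp)
  intro q hq
  exact ⟨sum_sq_apply_eq_zero_of_wirtingerBar_eq fibreMatrix_transpose (hrel q hq),
    sum_fderiv_fderiv_eq_zero_of_wirtingerBar_eq fibreMatrix_transpose
      (hz.contDiffAt (hU.mem_nhds hq)) (eventually_of_mem (hU.mem_nhds hq) hrel)⟩

end
end

section
/- Let U ⊆ ℝ × ℂ² ≅ ℝ⁵ be open with coordinates (x, q², q³), and let z : U → ℂ be a C² function such that at every point of U: (q² − 2i·z·x + z²·(q̄² + q̄³)) · (q³ − 2i·z·x + z²·(q̄² + q̄³)) = 1 (with z = z(x, q², q³)), and the complex derivative of ζ ↦ (q² − 2i·ζ·x + ζ²·(q̄² + q̄³))·(q³ − 2i·ζ·x + ζ²·(q̄² + q̄³)) is nonzero at ζ = z(x, q², q³). Then z is a harmonic morphism on U ⊆ ℝ⁵: the sum of the squares of its five coordinate partial derivatives vanishes and its Laplacian vanishes. -/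
open Complex

private lemma lineC (c w : ℂ) (t : ℝ) : HasDerivAt (fun t : ℝ => c + (t:ℂ)*w) w t := by
  simpa using (Complex.ofRealCLM.hasDerivAt.mul_const w).const_add c

private lemma key (U : Set (ℝ × ℂ × ℂ)) (hU : IsOpen U)
    (z : ℝ × ℂ × ℂ → ℂ) (hz : ContDiffOn ℝ 2 z U)
    (hsol : ∀ p ∈ U,
      (p.2.1 - 2 * Complex.I * z p * (p.1 : ℂ)
          + (z p) ^ 2 * ((starRingEnd ℂ) p.2.1 + (starRingEnd ℂ) p.2.2))
      * (p.2.2 - 2 * Complex.I * z p * (p.1 : ℂ)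
          + (z p) ^ 2 * ((starRingEnd ℂ) p.2.1 + (starRingEnd ℂ) p.2.2)) = 1)
    (p : ℝ × ℂ × ℂ) (hp : p ∈ U) (a : ℝ) (b e : ℂ)
    (D M x0 q2 q3 s0 k ζ A0 B0 A1 B1 A2 : ℂ)
    (hD : D = fderiv ℝ z p ((a : ℝ), b, e))
    (hM : M = fderiv ℝ (fun p' => fderiv ℝ z p' ((a : ℝ), b, e)) p ((a : ℝ), b, e))
    (hx0 : x0 = (p.1 : ℂ)) (hq2 : q2 = p.2.1) (hq3 : q3 = p.2.2) (hζ : ζ = z p)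
    (hs0 : s0 = (starRingEnd ℂ) p.2.1 + (starRingEnd ℂ) p.2.2)
    (hk : k = (starRingEnd ℂ) b + (starRingEnd ℂ) e)
    (hA0 : A0 = q2 - 2*I*ζ*x0 + ζ^2*s0)
    (hB0 : B0 = q3 - 2*I*ζ*x0 + ζ^2*s0)
    (hA1 : A1 = b - 2*I*(D*x0 + ζ*(a:ℂ)) + (2*ζ*D*s0 + ζ^2*k))
    (hB1 : B1 = e - 2*I*(D*x0 + ζ*(a:ℂ)) + (2*ζ*D*s0 + ζ^2*k))
    (hA2 : A2 = -(2*I)*(M*x0 + 2*D*(a:ℂ)) + (2*D^2*s0 + 2*ζ*M*s0 + 4*ζ*D*k)) :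
    A1*B0 + A0*B1 = 0 ∧ A2*(A0+B0) + 2*(A1*B1) = 0 := by
  set v : ℝ × ℂ × ℂ := ((a : ℝ), b, e) with hv
  set u : ℝ → ℝ × ℂ × ℂ := fun t => p + t • v with huDef
  have hu1 : ∀ t, (u t).1 = p.1 + t*a := fun t => rfl
  have hu2 : ∀ t, (u t).2.1 = p.2.1 + (t:ℂ)*b := by
    intro t; show p.2.1 + t • b = _; rw [Complex.real_smul]
  have hu3 : ∀ t, (u t).2.2 = p.2.2 + (t:ℂ)*e := by
    intro t; show p.2.2 + t • e = _; rw [Complex.real_smul]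
  have hu0 : u 0 = p := by simp [huDef]
  have hucont : Continuous u := by fun_prop
  set T : Set ℝ := u ⁻¹' U with hTdef
  have hT : IsOpen T := hU.preimage hucont
  have h0T : (0:ℝ) ∈ T := by simp [hTdef, hu0, hp]
  have hu' : ∀ t, HasDerivAt u v t := fun t => by
    have h := ((hasDerivAt_id t).smul_const v).const_add p
    rw [one_smul] at h; exact h
  set g : ℝ → ℂ := fun t => z (u t) with hgDef
  set Dg : ℝ → ℂ := fun t => fderiv ℝ z (u t) v with hDgDef
  have hg : ∀ t ∈ T, HasDerivAt g (Dg t) t := by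
    intro t ht
    exact (((hz.contDiffAt (hU.mem_nhds ht)).differentiableAt
      (by norm_num)).hasFDerivAt).comp_hasDerivAt t (hu' t)
  have hDgdiff : DifferentiableAt ℝ (fun p' => fderiv ℝ z p' v) p := by
    have h2 : ContDiffAt ℝ 2 z p := hz.contDiffAt (hU.mem_nhds hp)
    have h1 : ContDiffAt ℝ 1 (fderiv ℝ z) p := h2.fderiv_right (by norm_num)
    exact ((ContinuousLinearMap.apply ℝ ℂ v).differentiable.differentiableAt).comp p
      (h1.differentiableAt one_ne_zero)
  have hDg0 : HasDerivAt Dg M 0 := by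
    have hf : HasFDerivAt (fun p' => fderiv ℝ z p' v)
        (fderiv ℝ (fun p' => fderiv ℝ z p' v) p) (u 0) := hu0 ▸ hDgdiff.hasFDerivAt
    have h := hf.comp_hasDerivAt 0 (hu' 0)
    rw [hM]; exact h
  -- line coordinate functions
  set X : ℝ → ℂ := fun t => (p.1 : ℂ) + (t:ℂ)*(a:ℂ) with hXdef
  set Q2 : ℝ → ℂ := fun t => p.2.1 + (t:ℂ)*b with hQ2def
  set Q3 : ℝ → ℂ := fun t => p.2.2 + (t:ℂ)*e with hQ3def
  set S : ℝ → ℂ := fun t => s0 + (t:ℂ)*k with hSdef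
  have hX : ∀ t, HasDerivAt X (a:ℂ) t := fun t => lineC _ _ t
  have hQ2 : ∀ t, HasDerivAt Q2 b t := fun t => lineC _ _ t
  have hQ3 : ∀ t, HasDerivAt Q3 e t := fun t => lineC _ _ t
  have hS : ∀ t, HasDerivAt S k t := fun t => lineC _ _ t
  have hXc : ∀ t, ((u t).1 : ℂ) = X t := by intro t; rw [hu1]; push_cast; ring
  have hSc : ∀ t, (starRingEnd ℂ) ((u t).2.1) + (starRingEnd ℂ) ((u t).2.2) = S t := by
    intro t; rw [hu2, hu3]; simp [hSdef, hs0, hk, map_add, map_mul, Complex.conj_ofReal]; ring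
  -- factors
  set A : ℝ → ℂ := fun t => Q2 t - 2*I*(g t)*(X t) + (g t) * (g t) * (S t) with hAdef
  set B : ℝ → ℂ := fun t => Q3 t - 2*I*(g t)*(X t) + (g t) * (g t) * (S t) with hBdef
  have hcon : ∀ t ∈ T, A t * B t = 1 := by
    intro t ht
    have h := hsol (u t) ht
    rw [pow_two, hSc, hXc, hu2, hu3] at h
    exact h
  -- first derivatives
  set A' : ℝ → ℂ := fun t =>
    b - 2*I*(Dg t * X t + g t * (a:ℂ)) + (2*(g t)*(Dg t)*(S t) + (g t)*(g t)*k) with hA'def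
  set B' : ℝ → ℂ := fun t =>
    e - 2*I*(Dg t * X t + g t * (a:ℂ)) + (2*(g t)*(Dg t)*(S t) + (g t)*(g t)*k) with hB'def
  have hpow : ∀ t ∈ T, HasDerivAt (fun t => g t * g t) (Dg t * g t + g t * Dg t) t :=
    fun t ht => (hg t ht).mul (hg t ht)
  have hA' : ∀ t ∈ T, HasDerivAt A (A' t) t := by
    intro t ht
    have h := ((hQ2 t).sub ((((hg t ht).const_mul (2*I))).mul (hX t))).add
      ((hpow t ht).mul (hS t))
    refine h.congr_deriv ?_
    simp only [hA'def]; ring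
  have hB' : ∀ t ∈ T, HasDerivAt B (B' t) t := by
    intro t ht
    have h := ((hQ3 t).sub ((((hg t ht).const_mul (2*I))).mul (hX t))).add
      ((hpow t ht).mul (hS t))
    refine h.congr_deriv ?_
    simp only [hB'def]; ring
  -- E := derivative of A*B, vanishes on T
  set E : ℝ → ℂ := fun t => A' t * B t + A t * B' t with hEdef
  have hE0 : ∀ t ∈ T, E t = 0 := by
    intro t ht
    have h1 : HasDerivAt (fun t => A t * B t) (E t) t := (hA' t ht).mul (hB' t ht)
    have h2 : HasDerivAt (fun t => A t * B t) 0 t := by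
      have hev : (fun t => A t * B t) =ᶠ[nhds t] fun _ => (1:ℂ) := by
        filter_upwards [hT.mem_nhds ht] with s hs using hcon s hs
      exact (hasDerivAt_const t (1:ℂ)).congr_of_eventuallyEq hev
    exact h1.unique h2
  -- values at 0
  have hg0 : g 0 = ζ := by show z (u 0) = ζ; rw [hu0, hζ]
  have hDg00 : Dg 0 = D := by show fderiv ℝ z (u 0) v = D; rw [hu0, hD]
  have hX0 : X 0 = x0 := by simp [hXdef, hx0]
  have hQ20 : Q2 0 = q2 := by simp [hQ2def, hq2]
  have hQ30 : Q3 0 = q3 := by simp [hQ3def, hq3]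
  have hS0 : S 0 = s0 := by simp [hSdef]
  have hA0v : A 0 = A0 := by
    simp only [hAdef, hg0, hX0, hQ20, hS0]; rw [hA0]; ring
  have hB0v : B 0 = B0 := by
    simp only [hBdef, hg0, hX0, hQ30, hS0]; rw [hB0]; ring
  have hA1v : A' 0 = A1 := by
    simp only [hA'def, hg0, hDg00, hX0, hS0]; rw [hA1]; ring
  have hB1v : B' 0 = B1 := by
    simp only [hB'def, hg0, hDg00, hX0, hS0]; rw [hB1]; ring
  -- first conclusion
  have hc1 : A1*B0 + A0*B1 = 0 := by
    have h := hE0 0 h0T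
    simp only [hEdef] at h
    rw [hA1v, hB1v, hA0v, hB0v] at h
    exact h
  -- second derivative of the constraint
  have hg00 := hg 0 h0T
  have hA'd : HasDerivAt A'
      (0 - 2*I*(M * X 0 + Dg 0 * (a:ℂ) + Dg 0 * (a:ℂ)) +
        ((2 * Dg 0 * Dg 0 + 2 * g 0 * M) * S 0 + (2 * g 0 * Dg 0) * k +
          ((Dg 0 * g 0 + g 0 * Dg 0) * k))) 0 := by
    have h := ((hasDerivAt_const (0:ℝ) b).sub
        (((hDg0.mul (hX 0)).add (hg00.mul_const (a:ℂ))).const_mul (2*I))).add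
      (((((hg00.const_mul (2:ℂ)).mul hDg0).mul (hS 0))).add
        ((hg00.mul hg00).mul_const k))
    exact h.congr_deriv rfl
  have hB'd : HasDerivAt B'
      (0 - 2*I*(M * X 0 + Dg 0 * (a:ℂ) + Dg 0 * (a:ℂ)) +
        ((2 * Dg 0 * Dg 0 + 2 * g 0 * M) * S 0 + (2 * g 0 * Dg 0) * k +
          ((Dg 0 * g 0 + g 0 * Dg 0) * k))) 0 := by
    have h := ((hasDerivAt_const (0:ℝ) e).sub
        (((hDg0.mul (hX 0)).add (hg00.mul_const (a:ℂ))).const_mul (2*I))).add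
      (((((hg00.const_mul (2:ℂ)).mul hDg0).mul (hS 0))).add
        ((hg00.mul hg00).mul_const k))
    exact h.congr_deriv rfl
  set W : ℂ := 0 - 2*I*(M * X 0 + Dg 0 * (a:ℂ) + Dg 0 * (a:ℂ)) +
        ((2 * Dg 0 * Dg 0 + 2 * g 0 * M) * S 0 + (2 * g 0 * Dg 0) * k +
          ((Dg 0 * g 0 + g 0 * Dg 0) * k)) with hWdef
  have hE2 : HasDerivAt E (W * B 0 + A' 0 * B' 0 + (A' 0 * B' 0 + A 0 * W)) 0 :=
    (hA'd.mul (hB' 0 h0T)).add ((hA' 0 h0T).mul hB'd)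
  have hEc : HasDerivAt E 0 0 := by
    have hev : E =ᶠ[nhds (0:ℝ)] fun _ => (0:ℂ) := by
      filter_upwards [hT.mem_nhds h0T] with s hs using hE0 s hs
    exact (hasDerivAt_const (0:ℝ) (0:ℂ)).congr_of_eventuallyEq hev
  have hsecond := hE2.unique hEc
  rw [hWdef, hg0, hDg00, hX0, hS0, hA0v, hB0v, hA1v, hB1v] at hsecond
  refine ⟨hc1, ?_⟩
  rw [hA2]
  rw [hA0, hB0] at hsecond ⊢
  linear_combination hsecond

set_option maxHeartbeats 1000000 in
/-- Example 3.9 of the paper. On a domain `U ⊆ ℝ × ℂ² ≅ ℝ⁵`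
(coordinates `(x, q², q³)`), any C² solution `z` of the quartic equation
`(q² − 2i·z·x + z²(q̄² + q̄³))·(q³ − 2i·z·x + z²(q̄² + q̄³)) = 1`
with nonvanishing `ζ`-derivative is a harmonic morphism on `ℝ⁵`. -/
theorem example_R5_quartic_harmonic_morphism
    (U : Set (ℝ × ℂ × ℂ)) (hU : IsOpen U)
    (z : ℝ × ℂ × ℂ → ℂ) (hz : ContDiffOn ℝ 2 z U)
    (hsol : ∀ p ∈ U,
      (p.2.1 - 2 * Complex.I * z p * (p.1 : ℂ)
          + (z p) ^ 2 * ((starRingEnd ℂ) p.2.1 + (starRingEnd ℂ) p.2.2))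
      * (p.2.2 - 2 * Complex.I * z p * (p.1 : ℂ)
          + (z p) ^ 2 * ((starRingEnd ℂ) p.2.1 + (starRingEnd ℂ) p.2.2)) = 1)
    (hreg : ∀ p ∈ U,
      deriv (fun ζ =>
        (p.2.1 - 2 * Complex.I * ζ * (p.1 : ℂ)
            + ζ ^ 2 * ((starRingEnd ℂ) p.2.1 + (starRingEnd ℂ) p.2.2))
        * (p.2.2 - 2 * Complex.I * ζ * (p.1 : ℂ)
            + ζ ^ 2 * ((starRingEnd ℂ) p.2.1 + (starRingEnd ℂ) p.2.2))) (z p) ≠ 0) :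
    ∀ p ∈ U,
      ((fderiv ℝ z p ((1 : ℝ), (0 : ℂ), (0 : ℂ))) ^ 2
        + (fderiv ℝ z p ((0 : ℝ), (1 : ℂ), (0 : ℂ))) ^ 2
        + (fderiv ℝ z p ((0 : ℝ), Complex.I, (0 : ℂ))) ^ 2
        + (fderiv ℝ z p ((0 : ℝ), (0 : ℂ), (1 : ℂ))) ^ 2
        + (fderiv ℝ z p ((0 : ℝ), (0 : ℂ), Complex.I)) ^ 2 = 0) ∧
      (fderiv ℝ (fun p' => fderiv ℝ z p' ((1 : ℝ), (0 : ℂ), (0 : ℂ))) p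
          ((1 : ℝ), (0 : ℂ), (0 : ℂ))
        + fderiv ℝ (fun p' => fderiv ℝ z p' ((0 : ℝ), (1 : ℂ), (0 : ℂ))) p
          ((0 : ℝ), (1 : ℂ), (0 : ℂ))
        + fderiv ℝ (fun p' => fderiv ℝ z p' ((0 : ℝ), Complex.I, (0 : ℂ))) p
          ((0 : ℝ), Complex.I, (0 : ℂ))
        + fderiv ℝ (fun p' => fderiv ℝ z p' ((0 : ℝ), (0 : ℂ), (1 : ℂ))) p
          ((0 : ℝ), (0 : ℂ), (1 : ℂ))
        + fderiv ℝ (fun p' => fderiv ℝ z p' ((0 : ℝ), (0 : ℂ), Complex.I)) p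
          ((0 : ℝ), (0 : ℂ), Complex.I) = 0) := by
  intro p hp
  have hphi : HasDerivAt (fun w : ℂ =>
      (p.2.1 - 2 * Complex.I * w * (p.1 : ℂ) + w ^ 2 * ((starRingEnd ℂ) p.2.1 + (starRingEnd ℂ) p.2.2))
      * (p.2.2 - 2 * Complex.I * w * (p.1 : ℂ) + w ^ 2 * ((starRingEnd ℂ) p.2.1 + (starRingEnd ℂ) p.2.2)))
      ((-(2*Complex.I)*(p.1 : ℂ) + 2*(z p)*((starRingEnd ℂ) p.2.1 + (starRingEnd ℂ) p.2.2)) * (p.2.2 - 2 * Complex.I * z p * (p.1 : ℂ) + (z p) ^ 2 * ((starRingEnd ℂ) p.2.1 + (starRingEnd ℂ) p.2.2)) + (p.2.1 - 2 * Complex.I * z p * (p.1 : ℂ) + (z p) ^ 2 * ((starRingEnd ℂ) p.2.1 + (starRingEnd ℂ) p.2.2)) * (-(2*Complex.I)*(p.1 : ℂ) + 2*(z p)*((starRingEnd ℂ) p.2.1 + (starRingEnd ℂ) p.2.2))) (z p) := by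
    have hf1 : HasDerivAt (fun w : ℂ => p.2.1 - 2 * Complex.I * w * (p.1 : ℂ) + w ^ 2 * ((starRingEnd ℂ) p.2.1 + (starRingEnd ℂ) p.2.2))
        (-(2*Complex.I)*(p.1 : ℂ) + 2*(z p)*((starRingEnd ℂ) p.2.1 + (starRingEnd ℂ) p.2.2)) (z p) := by
      have h := ((hasDerivAt_const (z p) (p.2.1)).sub
          (((hasDerivAt_id (z p)).const_mul (2*Complex.I)).mul_const (p.1 : ℂ))).add
        ((hasDerivAt_pow 2 (z p)).mul_const ((starRingEnd ℂ) p.2.1 + (starRingEnd ℂ) p.2.2))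
      refine h.congr_deriv ?_
      norm_num
    have hf2 : HasDerivAt (fun w : ℂ => p.2.2 - 2 * Complex.I * w * (p.1 : ℂ) + w ^ 2 * ((starRingEnd ℂ) p.2.1 + (starRingEnd ℂ) p.2.2))
        (-(2*Complex.I)*(p.1 : ℂ) + 2*(z p)*((starRingEnd ℂ) p.2.1 + (starRingEnd ℂ) p.2.2)) (z p) := by
      have h := ((hasDerivAt_const (z p) (p.2.2)).sub
          (((hasDerivAt_id (z p)).const_mul (2*Complex.I)).mul_const (p.1 : ℂ))).add
        ((hasDerivAt_pow 2 (z p)).mul_const ((starRingEnd ℂ) p.2.1 + (starRingEnd ℂ) p.2.2))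
      refine h.congr_deriv ?_
      norm_num
    exact hf1.mul hf2
  have hcraw : (-(2*Complex.I)*(p.1 : ℂ) + 2*(z p)*((starRingEnd ℂ) p.2.1 + (starRingEnd ℂ) p.2.2)) * (p.2.2 - 2 * Complex.I * z p * (p.1 : ℂ) + (z p) ^ 2 * ((starRingEnd ℂ) p.2.1 + (starRingEnd ℂ) p.2.2)) + (p.2.1 - 2 * Complex.I * z p * (p.1 : ℂ) + (z p) ^ 2 * ((starRingEnd ℂ) p.2.1 + (starRingEnd ℂ) p.2.2)) * (-(2*Complex.I)*(p.1 : ℂ) + 2*(z p)*((starRingEnd ℂ) p.2.1 + (starRingEnd ℂ) p.2.2)) ≠ 0 := by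
    have h := hreg p hp
    rw [hphi.deriv] at h
    exact h
  have hcc : (-(2*Complex.I)*(p.1 : ℂ) + 2*(z p)*((starRingEnd ℂ) p.2.1 + (starRingEnd ℂ) p.2.2)) * ((p.2.1 - 2 * Complex.I * z p * (p.1 : ℂ) + (z p) ^ 2 * ((starRingEnd ℂ) p.2.1 + (starRingEnd ℂ) p.2.2)) + (p.2.2 - 2 * Complex.I * z p * (p.1 : ℂ) + (z p) ^ 2 * ((starRingEnd ℂ) p.2.1 + (starRingEnd ℂ) p.2.2))) ≠ 0 := fun hh => hcraw (by linear_combination hh)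
  obtain ⟨h11, h12⟩ := key U hU z hz hsol p hp (1:ℝ) (0:ℂ) (0:ℂ)
    (fderiv ℝ z p ((1:ℝ), (0:ℂ), (0:ℂ))) (fderiv ℝ (fun p' => fderiv ℝ z p' ((1:ℝ), (0:ℂ), (0:ℂ))) p ((1:ℝ), (0:ℂ), (0:ℂ))) (p.1 : ℂ) p.2.1 p.2.2 ((starRingEnd ℂ) p.2.1 + (starRingEnd ℂ) p.2.2) (0:ℂ) (z p)
    (p.2.1 - 2 * Complex.I * z p * (p.1 : ℂ) + (z p) ^ 2 * ((starRingEnd ℂ) p.2.1 + (starRingEnd ℂ) p.2.2)) (p.2.2 - 2 * Complex.I * z p * (p.1 : ℂ) + (z p) ^ 2 * ((starRingEnd ℂ) p.2.1 + (starRingEnd ℂ) p.2.2))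
    ((0:ℂ) - 2*Complex.I*((fderiv ℝ z p ((1:ℝ), (0:ℂ), (0:ℂ)))*(p.1 : ℂ) + (z p)*(((1:ℝ)) : ℂ)) + (2*(z p)*(fderiv ℝ z p ((1:ℝ), (0:ℂ), (0:ℂ)))*((starRingEnd ℂ) p.2.1 + (starRingEnd ℂ) p.2.2) + (z p)^2*(0:ℂ)))
    ((0:ℂ) - 2*Complex.I*((fderiv ℝ z p ((1:ℝ), (0:ℂ), (0:ℂ)))*(p.1 : ℂ) + (z p)*(((1:ℝ)) : ℂ)) + (2*(z p)*(fderiv ℝ z p ((1:ℝ), (0:ℂ), (0:ℂ)))*((starRingEnd ℂ) p.2.1 + (starRingEnd ℂ) p.2.2) + (z p)^2*(0:ℂ)))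
    (-(2*Complex.I)*((fderiv ℝ (fun p' => fderiv ℝ z p' ((1:ℝ), (0:ℂ), (0:ℂ))) p ((1:ℝ), (0:ℂ), (0:ℂ)))*(p.1 : ℂ) + 2*(fderiv ℝ z p ((1:ℝ), (0:ℂ), (0:ℂ)))*(((1:ℝ)) : ℂ)) + (2*(fderiv ℝ z p ((1:ℝ), (0:ℂ), (0:ℂ)))^2*((starRingEnd ℂ) p.2.1 + (starRingEnd ℂ) p.2.2) + 2*(z p)*(fderiv ℝ (fun p' => fderiv ℝ z p' ((1:ℝ), (0:ℂ), (0:ℂ))) p ((1:ℝ), (0:ℂ), (0:ℂ)))*((starRingEnd ℂ) p.2.1 + (starRingEnd ℂ) p.2.2) + 4*(z p)*(fderiv ℝ z p ((1:ℝ), (0:ℂ), (0:ℂ)))*(0:ℂ)))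
    rfl rfl rfl rfl rfl rfl rfl (by simp) rfl rfl rfl rfl rfl
  obtain ⟨h21, h22⟩ := key U hU z hz hsol p hp (0:ℝ) (1:ℂ) (0:ℂ)
    (fderiv ℝ z p ((0:ℝ), (1:ℂ), (0:ℂ))) (fderiv ℝ (fun p' => fderiv ℝ z p' ((0:ℝ), (1:ℂ), (0:ℂ))) p ((0:ℝ), (1:ℂ), (0:ℂ))) (p.1 : ℂ) p.2.1 p.2.2 ((starRingEnd ℂ) p.2.1 + (starRingEnd ℂ) p.2.2) (1:ℂ) (z p)
    (p.2.1 - 2 * Complex.I * z p * (p.1 : ℂ) + (z p) ^ 2 * ((starRingEnd ℂ) p.2.1 + (starRingEnd ℂ) p.2.2)) (p.2.2 - 2 * Complex.I * z p * (p.1 : ℂ) + (z p) ^ 2 * ((starRingEnd ℂ) p.2.1 + (starRingEnd ℂ) p.2.2))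
    ((1:ℂ) - 2*Complex.I*((fderiv ℝ z p ((0:ℝ), (1:ℂ), (0:ℂ)))*(p.1 : ℂ) + (z p)*(((0:ℝ)) : ℂ)) + (2*(z p)*(fderiv ℝ z p ((0:ℝ), (1:ℂ), (0:ℂ)))*((starRingEnd ℂ) p.2.1 + (starRingEnd ℂ) p.2.2) + (z p)^2*(1:ℂ)))
    ((0:ℂ) - 2*Complex.I*((fderiv ℝ z p ((0:ℝ), (1:ℂ), (0:ℂ)))*(p.1 : ℂ) + (z p)*(((0:ℝ)) : ℂ)) + (2*(z p)*(fderiv ℝ z p ((0:ℝ), (1:ℂ), (0:ℂ)))*((starRingEnd ℂ) p.2.1 + (starRingEnd ℂ) p.2.2) + (z p)^2*(1:ℂ)))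
    (-(2*Complex.I)*((fderiv ℝ (fun p' => fderiv ℝ z p' ((0:ℝ), (1:ℂ), (0:ℂ))) p ((0:ℝ), (1:ℂ), (0:ℂ)))*(p.1 : ℂ) + 2*(fderiv ℝ z p ((0:ℝ), (1:ℂ), (0:ℂ)))*(((0:ℝ)) : ℂ)) + (2*(fderiv ℝ z p ((0:ℝ), (1:ℂ), (0:ℂ)))^2*((starRingEnd ℂ) p.2.1 + (starRingEnd ℂ) p.2.2) + 2*(z p)*(fderiv ℝ (fun p' => fderiv ℝ z p' ((0:ℝ), (1:ℂ), (0:ℂ))) p ((0:ℝ), (1:ℂ), (0:ℂ)))*((starRingEnd ℂ) p.2.1 + (starRingEnd ℂ) p.2.2) + 4*(z p)*(fderiv ℝ z p ((0:ℝ), (1:ℂ), (0:ℂ)))*(1:ℂ)))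
    rfl rfl rfl rfl rfl rfl rfl (by simp) rfl rfl rfl rfl rfl
  obtain ⟨h31, h32⟩ := key U hU z hz hsol p hp (0:ℝ) Complex.I (0:ℂ)
    (fderiv ℝ z p ((0:ℝ), Complex.I, (0:ℂ))) (fderiv ℝ (fun p' => fderiv ℝ z p' ((0:ℝ), Complex.I, (0:ℂ))) p ((0:ℝ), Complex.I, (0:ℂ))) (p.1 : ℂ) p.2.1 p.2.2 ((starRingEnd ℂ) p.2.1 + (starRingEnd ℂ) p.2.2) (-Complex.I) (z p)
    (p.2.1 - 2 * Complex.I * z p * (p.1 : ℂ) + (z p) ^ 2 * ((starRingEnd ℂ) p.2.1 + (starRingEnd ℂ) p.2.2)) (p.2.2 - 2 * Complex.I * z p * (p.1 : ℂ) + (z p) ^ 2 * ((starRingEnd ℂ) p.2.1 + (starRingEnd ℂ) p.2.2))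
    (Complex.I - 2*Complex.I*((fderiv ℝ z p ((0:ℝ), Complex.I, (0:ℂ)))*(p.1 : ℂ) + (z p)*(((0:ℝ)) : ℂ)) + (2*(z p)*(fderiv ℝ z p ((0:ℝ), Complex.I, (0:ℂ)))*((starRingEnd ℂ) p.2.1 + (starRingEnd ℂ) p.2.2) + (z p)^2*(-Complex.I)))
    ((0:ℂ) - 2*Complex.I*((fderiv ℝ z p ((0:ℝ), Complex.I, (0:ℂ)))*(p.1 : ℂ) + (z p)*(((0:ℝ)) : ℂ)) + (2*(z p)*(fderiv ℝ z p ((0:ℝ), Complex.I, (0:ℂ)))*((starRingEnd ℂ) p.2.1 + (starRingEnd ℂ) p.2.2) + (z p)^2*(-Complex.I)))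
    (-(2*Complex.I)*((fderiv ℝ (fun p' => fderiv ℝ z p' ((0:ℝ), Complex.I, (0:ℂ))) p ((0:ℝ), Complex.I, (0:ℂ)))*(p.1 : ℂ) + 2*(fderiv ℝ z p ((0:ℝ), Complex.I, (0:ℂ)))*(((0:ℝ)) : ℂ)) + (2*(fderiv ℝ z p ((0:ℝ), Complex.I, (0:ℂ)))^2*((starRingEnd ℂ) p.2.1 + (starRingEnd ℂ) p.2.2) + 2*(z p)*(fderiv ℝ (fun p' => fderiv ℝ z p' ((0:ℝ), Complex.I, (0:ℂ))) p ((0:ℝ), Complex.I, (0:ℂ)))*((starRingEnd ℂ) p.2.1 + (starRingEnd ℂ) p.2.2) + 4*(z p)*(fderiv ℝ z p ((0:ℝ), Complex.I, (0:ℂ)))*(-Complex.I)))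
    rfl rfl rfl rfl rfl rfl rfl (by simp) rfl rfl rfl rfl rfl
  obtain ⟨h41, h42⟩ := key U hU z hz hsol p hp (0:ℝ) (0:ℂ) (1:ℂ)
    (fderiv ℝ z p ((0:ℝ), (0:ℂ), (1:ℂ))) (fderiv ℝ (fun p' => fderiv ℝ z p' ((0:ℝ), (0:ℂ), (1:ℂ))) p ((0:ℝ), (0:ℂ), (1:ℂ))) (p.1 : ℂ) p.2.1 p.2.2 ((starRingEnd ℂ) p.2.1 + (starRingEnd ℂ) p.2.2) (1:ℂ) (z p)
    (p.2.1 - 2 * Complex.I * z p * (p.1 : ℂ) + (z p) ^ 2 * ((starRingEnd ℂ) p.2.1 + (starRingEnd ℂ) p.2.2)) (p.2.2 - 2 * Complex.I * z p * (p.1 : ℂ) + (z p) ^ 2 * ((starRingEnd ℂ) p.2.1 + (starRingEnd ℂ) p.2.2))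
    ((0:ℂ) - 2*Complex.I*((fderiv ℝ z p ((0:ℝ), (0:ℂ), (1:ℂ)))*(p.1 : ℂ) + (z p)*(((0:ℝ)) : ℂ)) + (2*(z p)*(fderiv ℝ z p ((0:ℝ), (0:ℂ), (1:ℂ)))*((starRingEnd ℂ) p.2.1 + (starRingEnd ℂ) p.2.2) + (z p)^2*(1:ℂ)))
    ((1:ℂ) - 2*Complex.I*((fderiv ℝ z p ((0:ℝ), (0:ℂ), (1:ℂ)))*(p.1 : ℂ) + (z p)*(((0:ℝ)) : ℂ)) + (2*(z p)*(fderiv ℝ z p ((0:ℝ), (0:ℂ), (1:ℂ)))*((starRingEnd ℂ) p.2.1 + (starRingEnd ℂ) p.2.2) + (z p)^2*(1:ℂ)))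
    (-(2*Complex.I)*((fderiv ℝ (fun p' => fderiv ℝ z p' ((0:ℝ), (0:ℂ), (1:ℂ))) p ((0:ℝ), (0:ℂ), (1:ℂ)))*(p.1 : ℂ) + 2*(fderiv ℝ z p ((0:ℝ), (0:ℂ), (1:ℂ)))*(((0:ℝ)) : ℂ)) + (2*(fderiv ℝ z p ((0:ℝ), (0:ℂ), (1:ℂ)))^2*((starRingEnd ℂ) p.2.1 + (starRingEnd ℂ) p.2.2) + 2*(z p)*(fderiv ℝ (fun p' => fderiv ℝ z p' ((0:ℝ), (0:ℂ), (1:ℂ))) p ((0:ℝ), (0:ℂ), (1:ℂ)))*((starRingEnd ℂ) p.2.1 + (starRingEnd ℂ) p.2.2) + 4*(z p)*(fderiv ℝ z p ((0:ℝ), (0:ℂ), (1:ℂ)))*(1:ℂ)))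
    rfl rfl rfl rfl rfl rfl rfl (by simp) rfl rfl rfl rfl rfl
  obtain ⟨h51, h52⟩ := key U hU z hz hsol p hp (0:ℝ) (0:ℂ) Complex.I
    (fderiv ℝ z p ((0:ℝ), (0:ℂ), Complex.I)) (fderiv ℝ (fun p' => fderiv ℝ z p' ((0:ℝ), (0:ℂ), Complex.I)) p ((0:ℝ), (0:ℂ), Complex.I)) (p.1 : ℂ) p.2.1 p.2.2 ((starRingEnd ℂ) p.2.1 + (starRingEnd ℂ) p.2.2) (-Complex.I) (z p)
    (p.2.1 - 2 * Complex.I * z p * (p.1 : ℂ) + (z p) ^ 2 * ((starRingEnd ℂ) p.2.1 + (starRingEnd ℂ) p.2.2)) (p.2.2 - 2 * Complex.I * z p * (p.1 : ℂ) + (z p) ^ 2 * ((starRingEnd ℂ) p.2.1 + (starRingEnd ℂ) p.2.2))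
    ((0:ℂ) - 2*Complex.I*((fderiv ℝ z p ((0:ℝ), (0:ℂ), Complex.I))*(p.1 : ℂ) + (z p)*(((0:ℝ)) : ℂ)) + (2*(z p)*(fderiv ℝ z p ((0:ℝ), (0:ℂ), Complex.I))*((starRingEnd ℂ) p.2.1 + (starRingEnd ℂ) p.2.2) + (z p)^2*(-Complex.I)))
    (Complex.I - 2*Complex.I*((fderiv ℝ z p ((0:ℝ), (0:ℂ), Complex.I))*(p.1 : ℂ) + (z p)*(((0:ℝ)) : ℂ)) + (2*(z p)*(fderiv ℝ z p ((0:ℝ), (0:ℂ), Complex.I))*((starRingEnd ℂ) p.2.1 + (starRingEnd ℂ) p.2.2) + (z p)^2*(-Complex.I)))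
    (-(2*Complex.I)*((fderiv ℝ (fun p' => fderiv ℝ z p' ((0:ℝ), (0:ℂ), Complex.I)) p ((0:ℝ), (0:ℂ), Complex.I))*(p.1 : ℂ) + 2*(fderiv ℝ z p ((0:ℝ), (0:ℂ), Complex.I))*(((0:ℝ)) : ℂ)) + (2*(fderiv ℝ z p ((0:ℝ), (0:ℂ), Complex.I))^2*((starRingEnd ℂ) p.2.1 + (starRingEnd ℂ) p.2.2) + 2*(z p)*(fderiv ℝ (fun p' => fderiv ℝ z p' ((0:ℝ), (0:ℂ), Complex.I)) p ((0:ℝ), (0:ℂ), Complex.I))*((starRingEnd ℂ) p.2.1 + (starRingEnd ℂ) p.2.2) + 4*(z p)*(fderiv ℝ z p ((0:ℝ), (0:ℂ), Complex.I))*(-Complex.I)))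
    rfl rfl rfl rfl rfl rfl rfl (by simp) rfl rfl rfl rfl rfl
  set w := z p with hwd
  set x0 : ℂ := (p.1 : ℂ) with hx0d
  set s0 : ℂ := (starRingEnd ℂ) p.2.1 + (starRingEnd ℂ) p.2.2 with hs0d
  set D1 := fderiv ℝ z p ((1:ℝ), (0:ℂ), (0:ℂ)) with hD1d
  set D2 := fderiv ℝ z p ((0:ℝ), (1:ℂ), (0:ℂ)) with hD2d
  set D3 := fderiv ℝ z p ((0:ℝ), Complex.I, (0:ℂ)) with hD3d
  set D4 := fderiv ℝ z p ((0:ℝ), (0:ℂ), (1:ℂ)) with hD4d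
  set D5 := fderiv ℝ z p ((0:ℝ), (0:ℂ), Complex.I) with hD5d
  set M1 := fderiv ℝ (fun p' => fderiv ℝ z p' ((1:ℝ), (0:ℂ), (0:ℂ))) p ((1:ℝ), (0:ℂ), (0:ℂ)) with hM1d
  set M2 := fderiv ℝ (fun p' => fderiv ℝ z p' ((0:ℝ), (1:ℂ), (0:ℂ))) p ((0:ℝ), (1:ℂ), (0:ℂ)) with hM2d
  set M3 := fderiv ℝ (fun p' => fderiv ℝ z p' ((0:ℝ), Complex.I, (0:ℂ))) p ((0:ℝ), Complex.I, (0:ℂ)) with hM3d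
  set M4 := fderiv ℝ (fun p' => fderiv ℝ z p' ((0:ℝ), (0:ℂ), (1:ℂ))) p ((0:ℝ), (0:ℂ), (1:ℂ)) with hM4d
  set M5 := fderiv ℝ (fun p' => fderiv ℝ z p' ((0:ℝ), (0:ℂ), Complex.I)) p ((0:ℝ), (0:ℂ), Complex.I) with hM5d
  set A0 : ℂ := p.2.1 - 2 * Complex.I * w * x0 + w ^ 2 * s0 with hA0d
  set B0 : ℂ := p.2.2 - 2 * Complex.I * w * x0 + w ^ 2 * s0 with hB0d
  push_cast at h11 h12 h21 h22 h31 h32 h41 h42 h51 h52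
  set d : ℂ := (-(2*Complex.I)*x0 + 2*w*s0) * (A0 + B0) with hdd
  have hd1 : D1 * d = (2*Complex.I*w*(A0+B0)) := by
    linear_combination h11 + D1 * hdd
  have hd2 : D2 * d = (-(B0 + w^2*(A0+B0))) := by
    linear_combination h21 + D2 * hdd
  have hd3 : D3 * d = (-(Complex.I*B0) + Complex.I*w^2*(A0+B0)) := by
    linear_combination h31 + D3 * hdd
  have hd4 : D4 * d = (-(A0 + w^2*(A0+B0))) := by
    linear_combination h41 + D4 * hdd
  have hd5 : D5 * d = (-(Complex.I*A0) + Complex.I*w^2*(A0+B0)) := by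
    linear_combination h51 + D5 * hdd
  have hm1 : M1 * d = (-((-(4*Complex.I)*D1 + 2*D1^2*s0)*(A0+B0)) - 2*((-(2*Complex.I)*(D1*x0 + w) + 2*w*D1*s0)*(-(2*Complex.I)*(D1*x0 + w) + 2*w*D1*s0))) := by
    linear_combination h12 + M1 * hdd
  have hm2 : M2 * d = (-((2*D2^2*s0 + 4*w*D2)*(A0+B0)) - 2*((1 - 2*Complex.I*D2*x0 + 2*w*D2*s0 + w^2)*(-(2*Complex.I)*D2*x0 + 2*w*D2*s0 + w^2))) := by
    linear_combination h22 + M2 * hdd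
  have hm3 : M3 * d = (-((2*D3^2*s0 - 4*Complex.I*w*D3)*(A0+B0)) - 2*((Complex.I - 2*Complex.I*D3*x0 + 2*w*D3*s0 - Complex.I*w^2)*(-(2*Complex.I)*D3*x0 + 2*w*D3*s0 - Complex.I*w^2))) := by
    linear_combination h32 + M3 * hdd
  have hm4 : M4 * d = (-((2*D4^2*s0 + 4*w*D4)*(A0+B0)) - 2*((-(2*Complex.I)*D4*x0 + 2*w*D4*s0 + w^2)*(1 + (-(2*Complex.I)*D4*x0 + 2*w*D4*s0 + w^2)))) := by
    linear_combination h42 + M4 * hdd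
  have hm5 : M5 * d = (-((2*D5^2*s0 - 4*Complex.I*w*D5)*(A0+B0)) - 2*((-(2*Complex.I)*D5*x0 + 2*w*D5*s0 - Complex.I*w^2)*(Complex.I + (-(2*Complex.I)*D5*x0 + 2*w*D5*s0 - Complex.I*w^2)))) := by
    linear_combination h52 + M5 * hdd
  clear hdd h11 h12 h21 h22 h31 h32 h41 h42 h51 h52 hcraw hphi hsol hreg hz hU
  clear_value d A0 B0 D1 D2 D3 D4 D5 M1 M2 M3 M4 M5 w x0 s0
  have H1 : (D1^2 + D2^2 + D3^2 + D4^2 + D5^2) * d^2 = 0 := by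
    linear_combination (d*D1 + (2)*Complex.I*w*B0 + (2)*Complex.I*w*A0) * hd1 + (d*D2 + (-1)*B0 + (-1)*w^2*B0 + (-1)*w^2*A0) * hd2 + (d*D3 + (-1)*Complex.I*B0 + Complex.I*w^2*B0 + Complex.I*w^2*A0) * hd3 + (d*D4 + (-1)*A0 + (-1)*w^2*B0 + (-1)*w^2*A0) * hd4 + (d*D5 + (-1)*Complex.I*A0 + Complex.I*w^2*B0 + Complex.I*w^2*A0) * hd5 + (B0^2 + A0^2 + (2)*w^2*B0^2 + (4)*w^2*A0*B0 + (2)*w^2*A0^2 + (2)*w^4*B0^2 + (4)*w^4*A0*B0 + (2)*w^4*A0^2) * Complex.I_sq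
  have H2 : (M1 + M2 + M3 + M4 + M5) * d^3 = 0 := by
    linear_combination (d^2) * hm1 + (d^2) * hm2 + (d^2) * hm3 + (d^2) * hm4 + (d^2) * hm5 + ((-2)*s0*B0*d*D1 + (-2)*s0*A0*d*D1 + (-8)*w^2*s0^2*d*D1 + (4)*Complex.I*B0*d + (4)*Complex.I*A0*d + (-4)*Complex.I*w*s0*B0^2 + (-8)*Complex.I*w*s0*A0*B0 + (-4)*Complex.I*w*s0*A0^2 + (16)*Complex.I*w*x0*s0*d*D1 + (16)*Complex.I*w^2*s0*d + (-16)*Complex.I*w^3*s0^2*B0 + (-16)*Complex.I*w^3*s0^2*A0 + (-8)*Complex.I^2*x0^2*d*D1 + (-16)*Complex.I^2*w*x0*d + (32)*Complex.I^2*w^2*x0*s0*B0 + (32)*Complex.I^2*w^2*x0*s0*A0 + (-16)*Complex.I^3*w*x0^2*B0 + (-16)*Complex.I^3*w*x0^2*A0) * hd1 + ((-2)*s0*B0*d*D2 + (2)*s0*B0^2 + (-2)*s0*A0*d*D2 + (2)*s0*A0*B0 + (-4)*w*B0*d + (-4)*w*A0*d + (-4)*w*s0*d + (2)*w^2*s0*B0^2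 + (4)*w^2*s0*A0*B0 + (2)*w^2*s0*A0^2 + (-8)*w^2*s0^2*d*D2 + (8)*w^2*s0^2*B0 + (-8)*w^3*s0*d + (8)*w^4*s0^2*B0 + (8)*w^4*s0^2*A0 + (4)*Complex.I*x0*d + (16)*Complex.I*w*x0*s0*d*D2 + (-16)*Complex.I*w*x0*s0*B0 + (8)*Complex.I*w^2*x0*d + (-16)*Complex.I*w^3*x0*s0*B0 + (-16)*Complex.I*w^3*x0*s0*A0 + (-8)*Complex.I^2*x0^2*d*D2 + (8)*Complex.I^2*x0^2*B0 + (8)*Complex.I^2*w^2*x0^2*B0 + (8)*Complex.I^2*w^2*x0^2*A0) * hd2 + ((-2)*s0*B0*d*D3 + (-2)*s0*A0*d*D3 + (-8)*w^2*s0^2*d*D3 + (2)*Complex.I*s0*B0^2 + (2)*Complex.I*s0*A0*B0 + (4)*Complex.I*w*B0*d + (4)*Complex.I*w*A0*d + (-4)*Complex.I*w*s0*d + (16)*Complex.I*w*x0*s0*d*D3 + (-2)*Complex.I*w^2*s0*B0^2 + (-4)*Complex.I*w^2*s0*A0*B0 + (-2)*Complex.I*w^2*s0*A0^2 + (8)*Complex.I*w^2*s0^2*B0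 + (8)*Complex.I*w^3*s0*d + (-8)*Complex.I*w^4*s0^2*B0 + (-8)*Complex.I*w^4*s0^2*A0 + (4)*Complex.I^2*x0*d + (-8)*Complex.I^2*x0^2*d*D3 + (-16)*Complex.I^2*w*x0*s0*B0 + (-8)*Complex.I^2*w^2*x0*d + (16)*Complex.I^2*w^3*x0*s0*B0 + (16)*Complex.I^2*w^3*x0*s0*A0 + (8)*Complex.I^3*x0^2*B0 + (-8)*Complex.I^3*w^2*x0^2*B0 + (-8)*Complex.I^3*w^2*x0^2*A0) * hd3 + ((-2)*s0*B0*d*D4 + (-2)*s0*A0*d*D4 + (2)*s0*A0*B0 + (2)*s0*A0^2 + (-4)*w*B0*d + (-4)*w*A0*d + (-4)*w*s0*d + (2)*w^2*s0*B0^2 + (4)*w^2*s0*A0*B0 + (2)*w^2*s0*A0^2 + (-8)*w^2*s0^2*d*D4 + (8)*w^2*s0^2*A0 + (-8)*w^3*s0*d + (8)*w^4*s0^2*B0 + (8)*w^4*s0^2*A0 + (4)*Complex.I*x0*d + (16)*Complex.I*w*x0*s0*d*D4 + (-16)*Complex.I*w*x0*s0*A0 + (8)*Complex.I*w^2*x0*d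 + (-16)*Complex.I*w^3*x0*s0*B0 + (-16)*Complex.I*w^3*x0*s0*A0 + (-8)*Complex.I^2*x0^2*d*D4 + (8)*Complex.I^2*x0^2*A0 + (8)*Complex.I^2*w^2*x0^2*B0 + (8)*Complex.I^2*w^2*x0^2*A0) * hd4 + ((-2)*s0*B0*d*D5 + (-2)*s0*A0*d*D5 + (-8)*w^2*s0^2*d*D5 + (2)*Complex.I*s0*A0*B0 + (2)*Complex.I*s0*A0^2 + (4)*Complex.I*w*B0*d + (4)*Complex.I*w*A0*d + (-4)*Complex.I*w*s0*d + (16)*Complex.I*w*x0*s0*d*D5 + (-2)*Complex.I*w^2*s0*B0^2 + (-4)*Complex.I*w^2*s0*A0*B0 + (-2)*Complex.I*w^2*s0*A0^2 + (8)*Complex.I*w^2*s0^2*A0 + (8)*Complex.I*w^3*s0*d + (-8)*Complex.I*w^4*s0^2*B0 + (-8)*Complex.I*w^4*s0^2*A0 + (4)*Complex.I^2*x0*d + (-8)*Complex.I^2*x0^2*d*D5 + (-16)*Complex.I^2*w*x0*s0*A0 + (-8)*Complex.I^2*w^2*x0*d + (16)*Complex.I^2*w^3*x0*s0*B0 + (16)*Complex.I^2*w^3*x0*s0*A0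 + (8)*Complex.I^3*x0^2*A0 + (-8)*Complex.I^3*w^2*x0^2*B0 + (-8)*Complex.I^3*w^2*x0^2*A0) * hd5 + ((-2)*s0*B0^3 + (-2)*s0*A0*B0^2 + (-2)*s0*A0^2*B0 + (-2)*s0*A0^3 + (4)*w*B0^2*d + (8)*w*A0*B0*d + (4)*w*A0^2*d + (4)*w*s0*B0*d + (4)*w*s0*A0*d + (-4)*w^2*d^2 + (-4)*w^2*s0*B0^3 + (-12)*w^2*s0*A0*B0^2 + (-12)*w^2*s0*A0^2*B0 + (-4)*w^2*s0*A0^3 + (-8)*w^2*s0^2*B0^2 + (-8)*w^2*s0^2*A0^2 + (8)*w^3*B0^2*d + (16)*w^3*A0*B0*d + (8)*w^3*A0^2*d + (16)*w^3*s0*B0*d + (16)*w^3*s0*A0*d + (-4)*w^4*d^2 + (-4)*w^4*s0*B0^3 + (-12)*w^4*s0*A0*B0^2 + (-12)*w^4*s0*A0^2*B0 + (-4)*w^4*s0*A0^3 + (-16)*w^4*s0^2*B0^2 + (-32)*w^4*s0^2*A0*B0 + (-16)*w^4*s0^2*A0^2 + (16)*w^5*s0*B0*d + (16)*w^5*s0*A0*d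 + (-16)*w^6*s0^2*B0^2 + (-32)*w^6*s0^2*A0*B0 + (-16)*w^6*s0^2*A0^2 + (-4)*Complex.I*x0*B0*d + (-4)*Complex.I*x0*A0*d + (16)*Complex.I*w*x0*s0*B0^2 + (16)*Complex.I*w*x0*s0*A0^2 + (-16)*Complex.I*w^2*x0*B0*d + (-16)*Complex.I*w^2*x0*A0*d + (32)*Complex.I*w^3*x0*s0*B0^2 + (64)*Complex.I*w^3*x0*s0*A0*B0 + (32)*Complex.I*w^3*x0*s0*A0^2 + (-16)*Complex.I*w^4*x0*B0*d + (-16)*Complex.I*w^4*x0*A0*d + (32)*Complex.I*w^5*x0*s0*B0^2 + (64)*Complex.I*w^5*x0*s0*A0*B0 + (32)*Complex.I*w^5*x0*s0*A0^2 + (-8)*Complex.I^2*x0^2*B0^2 + (-8)*Complex.I^2*x0^2*A0^2 + (-16)*Complex.I^2*w^2*x0^2*B0^2 + (-32)*Complex.I^2*w^2*x0^2*A0*B0 + (-16)*Complex.I^2*w^2*x0^2*A0^2 + (-16)*Complex.I^2*w^4*x0^2*B0^2 + (-32)*Complex.I^2*w^4*x0^2*A0*B0 + (-16)*Complex.I^2*w^4*x0^2*A0^2)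 * Complex.I_sq
  exact ⟨(mul_eq_zero.mp H1).resolve_right (pow_ne_zero 2 hcc),
    (mul_eq_zero.mp H2).resolve_right (pow_ne_zero 3 hcc)⟩
end
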